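/- arXiv:1607.08488 — 8 statements merged into one kernel-verified Lean document; each statement's English description precedes it below -/
import Mathlib

section
/- Let X be a real normed linear space and let x, y ∈ X. Then either y ∈ x⁺ or y ∈ x⁻. -/
/-- `y ∈ x⁺`: `‖x + λ y‖ ≥ ‖x‖` for all `λ ≥ 0`. -/
def inPlus {X : Type*} [NormedAddCommGroup X] [NormedSpace ℝ X] (x y : X) : Prop :=
  ∀ l : ℝ, 0 ≤ l → ‖x‖ ≤ ‖x + l • y‖

/-- `y ∈ x⁻`: `‖x + λ y‖ ≥ ‖x‖` for all `λ ≤ 0`. -/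
def inMinus {X : Type*} [NormedAddCommGroup X] [NormedSpace ℝ X] (x y : X) : Prop :=
  ∀ l : ℝ, l ≤ 0 → ‖x‖ ≤ ‖x + l • y‖

/-! The function `λ ↦ ‖x + λ y‖` is convex, and a convex function on the line cannot drop
strictly below its value at `0` on both sides of `0`, since `0` lies between the two points. -/

open Set

theorem ConvexOn.forall_ge_le_or_forall_le_le {β : Type*} [AddCommMonoid β] [LinearOrder β]
    [IsOrderedAddMonoid β] [Module ℝ β] [PosSMulStrictMono ℝ β] {s : Set ℝ} {f : ℝ → β}
    (hf : ConvexOn ℝ s f) (a : ℝ) :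
    (∀ t ∈ s, a ≤ t → f a ≤ f t) ∨ ∀ t ∈ s, t ≤ a → f a ≤ f t := by
  by_contra! ⟨⟨t, ht, hat, hft⟩, ⟨u, hu, hua, hfu⟩⟩
  have hmem : a ∈ segment ℝ u t := by rw [segment_eq_Icc (hua.trans hat)]; exact ⟨hua, hat⟩
  exact (hf.le_on_segment hu ht hmem).not_gt (max_lt hfu hft)

theorem convexOn_norm_add_smul {E : Type*} [SeminormedAddCommGroup E] [NormedSpace ℝ E]
    (x y : E) : ConvexOn ℝ univ fun l : ℝ ↦ ‖x + l • y‖ :=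
  (convexOn_univ_norm.translate_right x).comp_linearMap (LinearMap.toSpanSingleton ℝ E y)

theorem plus_or_minus {X : Type*} [NormedAddCommGroup X] [NormedSpace ℝ X] (x y : X) :
    inPlus x y ∨ inMinus x y := by
  simpa only [inPlus, inMinus, mem_univ, true_implies, zero_smul, add_zero] using
    (convexOn_norm_add_smul x y).forall_ge_le_or_forall_le_le 0
end

section
/- Let X be a finite dimensional real normed linear space and let T be a continuous linear operator on X whose norm attainment set M_T equals D ∪ (−D), where D is a closed connected subset of the unit sphere S_X. If A is a continuous linear operator on X with T ⊥_B A (in the operator norm), then there exists x ∈ D such that Tx ⊥_B Ax. -/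
/-!
By convexity of `λ ↦ ‖u + λ • v‖`, `u ⊥_B v` splits into orthogonality along `λ ≥ 0` and along
`λ ≤ 0`, and every pair `u, v` satisfies at least one of the two. Hence the closed sets
`P = {x | Tx ⊥_B Ax for λ ≥ 0}` and `N = {x | Tx ⊥_B Ax for λ ≤ 0}` cover `D`. Both meet `D`: a
limit of unit vectors at which `T + ε • A` attains its norm (`ε → 0⁺`) lies in `M_T ∩ P`, and `P` is
invariant under `x ↦ -x`, which exchanges `D` and `-D`; the same with `-A` gives a point of `N`.
Connectedness of `D` then yields a point of `D ∩ P ∩ N`.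
-/

/-- Birkhoff-James orthogonality: `x ⊥_B y` iff `‖x + λ y‖ ≥ ‖x‖` for all real `λ`. -/
def BJOrth {X : Type*} [NormedAddCommGroup X] [NormedSpace ℝ X] (x y : X) : Prop :=
  ∀ l : ℝ, ‖x‖ ≤ ‖x + l • y‖

/-- The norm attainment set `M_T` of a continuous linear operator `T`. -/
def normAttainSet {X : Type*} [NormedAddCommGroup X] [NormedSpace ℝ X]
    (T : X →L[ℝ] X) : Set X :=
  {x : X | ‖x‖ = 1 ∧ ‖T x‖ = ‖T‖}

open Filter Topology

section BirkhoffJames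

variable {E : Type*} [NormedAddCommGroup E] [NormedSpace ℝ E]

/-- `y ∈ x⁺` in the notation of Sain and Paul. -/
def BJOrthPos (x y : E) : Prop :=
  ∀ l : ℝ, 0 ≤ l → ‖x‖ ≤ ‖x + l • y‖

lemma convexOn_norm_add_smul_s5 (u v : E) : ConvexOn ℝ Set.univ fun l : ℝ => ‖u + l • v‖ := by
  refine (convexOn_univ_norm.comp_affineMap (AffineMap.lineMap (k := ℝ) u (u + v))).congr
    fun l _ => ?_
  simp [AffineMap.lineMap_apply, add_comm]

lemma norm_add_smul_le_of_le {u v : E} {e l : ℝ} (he : 0 < e) (hel : e ≤ l)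
    (h : ‖u‖ ≤ ‖u + e • v‖) : ‖u + e • v‖ ≤ ‖u + l • v‖ := by
  rcases hel.eq_or_lt with rfl | hel
  · rfl
  have hmem : e ∈ openSegment ℝ 0 l := by
    rw [openSegment_eq_Ioo (he.trans hel)]
    exact ⟨he, hel⟩
  simpa using (convexOn_norm_add_smul_s5 u v).le_right_of_left_le trivial trivial hmem
    (by simpa using h)

lemma bjOrth_iff_bjOrthPos_and_bjOrthPos_neg {x y : E} :
    BJOrth x y ↔ BJOrthPos x y ∧ BJOrthPos x (-y) := by
  refine ⟨fun h => ⟨fun l _ => h l, fun l _ => by simpa using h (-l)⟩, fun ⟨hpos, hneg⟩ l => ?_⟩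
  rcases le_total 0 l with hl | hl
  · exact hpos l hl
  · simpa using hneg (-l) (neg_nonneg.mpr hl)

lemma bjOrthPos_or_bjOrthPos_neg (x y : E) : BJOrthPos x y ∨ BJOrthPos x (-y) := by
  by_contra! h
  simp only [BJOrthPos, not_forall, not_le] at h
  obtain ⟨⟨l, hl, hlt⟩, ⟨m, hm, hmt⟩⟩ := h
  have hmem : (0 : ℝ) ∈ segment ℝ (-m) l := by
    rw [segment_eq_Icc (by linarith)]
    exact ⟨by linarith, hl⟩
  have := (convexOn_norm_add_smul_s5 x y).le_on_segment trivial trivial hmem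
  simp only [zero_smul, add_zero, neg_smul, smul_neg] at this hmt
  exact (this.trans_lt (max_lt hmt hlt)).false

lemma bjOrthPos_neg_neg {x y : E} : BJOrthPos (-x) (-y) ↔ BJOrthPos x y := by
  simp only [BJOrthPos, norm_neg, smul_neg, ← neg_add]

lemma isClosed_setOf_bjOrthPos {Y : Type*} [TopologicalSpace Y] {f g : Y → E}
    (hf : Continuous f) (hg : Continuous g) : IsClosed {z | BJOrthPos (f z) (g z)} := by
  simp only [BJOrthPos, Set.ofPred_forall]
  exact isClosed_iInter fun l => isClosed_iInter fun _ =>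
    isClosed_le hf.norm (hf.add (hg.const_smul l)).norm

end BirkhoffJames

section NormAttainment

variable {X : Type*} [NormedAddCommGroup X] [NormedSpace ℝ X]

lemma normAttainSet_nonempty [FiniteDimensional ℝ X] [Nontrivial X] (T : X →L[ℝ] X) :
    (normAttainSet T).Nonempty := by
  have hS : IsCompact ((fun x => ‖T x‖) '' Metric.sphere 0 1) :=
    (isCompact_sphere 0 1).image (by fun_prop)
  obtain ⟨x, hx, hTx⟩ := T.sSup_sphere_eq_norm ▸
    hS.sSup_mem ((NormedSpace.sphere_nonempty.mpr zero_le_one).image _)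
  exact ⟨x, mem_sphere_zero_iff_norm.mp hx, hTx⟩

lemma le_norm_add_smul_of_mem_normAttainSet {T A : X →L[ℝ] X} (hTA : BJOrthPos T A) {e t : ℝ}
    (he : 0 < e) (ht : 0 ≤ t) {x : X} (hx : x ∈ normAttainSet (T + e • A)) :
    ‖T‖ ≤ ‖T x + (e + t) • A x‖ := by
  have hTe : ‖T‖ ≤ ‖T x + e • A x‖ := by
    have h := hTA e he.le
    rwa [← hx.2] at h
  have hTx : ‖T x‖ ≤ ‖T‖ := by simpa [hx.1] using T.le_opNorm x
  -- `‖T x‖ ≤ ‖T x + e • A x‖`, so by convexity the bound persists for all coefficients `≥ e`.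
  exact hTe.trans (norm_add_smul_le_of_le he (by linarith) (hTx.trans hTe))

lemma exists_mem_normAttainSet_bjOrthPos [FiniteDimensional ℝ X] [Nontrivial X]
    {T A : X →L[ℝ] X} (hTA : BJOrthPos T A) : ∃ x ∈ normAttainSet T, BJOrthPos (T x) (A x) := by
  set e : ℕ → ℝ := fun n => 1 / (n + 1)
  have he : ∀ n, 0 < e n := fun n => by positivity
  have he0 : Tendsto e atTop (𝓝 0) := tendsto_one_div_add_atTop_nhds_zero_nat
  choose u hu using fun n => normAttainSet_nonempty (T + e n • A)
  obtain ⟨x, hx, φ, hφ, hux⟩ := (isCompact_sphere (0 : X) 1).tendsto_subseq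
    fun n => mem_sphere_zero_iff_norm.mpr (hu n).1
  have hbound : ∀ t : ℝ, 0 ≤ t → ‖T‖ ≤ ‖T x + t • A x‖ := by
    intro t ht
    have hcont : Continuous fun p : ℝ × X => ‖T p.2 + (p.1 + t) • A p.2‖ := by fun_prop
    have hlim := (hcont.tendsto (0, x)).comp ((he0.comp hφ.tendsto_atTop).prodMk_nhds hux)
    rw [zero_add] at hlim
    exact ge_of_tendsto' hlim fun n => le_norm_add_smul_of_mem_normAttainSet hTA (he _) ht (hu _)
  have hx1 : ‖x‖ = 1 := mem_sphere_zero_iff_norm.mp hx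
  have hTx : ‖T x‖ = ‖T‖ :=
    le_antisymm (by simpa [hx1] using T.le_opNorm x) (by simpa using hbound 0 le_rfl)
  exact ⟨x, ⟨hx1, hTx⟩, fun t ht => hTx ▸ hbound t ht⟩

lemma exists_mem_bjOrthPos_of_normAttainSet_eq_union_neg [FiniteDimensional ℝ X] [Nontrivial X]
    {T A : X →L[ℝ] X} {D : Set X} (hMT : normAttainSet T = D ∪ -D) (hTA : BJOrthPos T A) :
    ∃ x ∈ D, BJOrthPos (T x) (A x) := by
  obtain ⟨x, hxM, hx⟩ := exists_mem_normAttainSet_bjOrthPos hTA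
  rcases hMT ▸ hxM with hxD | hxD
  · exact ⟨x, hxD, hx⟩
  · exact ⟨-x, hxD, by simpa [bjOrthPos_neg_neg]⟩

end NormAttainment

theorem sain_paul_corollary_general {X : Type*} [NormedAddCommGroup X] [NormedSpace ℝ X]
    [FiniteDimensional ℝ X] (T A : X →L[ℝ] X) (D : Set X)
    (hD_conn : IsConnected D) (hMT : normAttainSet T = D ∪ (-D))
    (hTA : BJOrth T A) :
    ∃ x ∈ D, BJOrth (T x) (A x) := by
  obtain ⟨d, hd⟩ := hD_conn.nonempty
  have hdM : d ∈ normAttainSet T := hMT ▸ Or.inl hd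
  have : Nontrivial X := nontrivial_of_ne d 0 (ne_zero_of_norm_ne_zero (by simp [hdM.1]))
  rw [bjOrth_iff_bjOrthPos_and_bjOrthPos_neg] at hTA
  obtain ⟨x, hxD, hx⟩ := isPreconnected_closed_iff.mp hD_conn.isPreconnected
    {x | BJOrthPos (T x) (A x)} {x | BJOrthPos (T x) (-A x)}
    (isClosed_setOf_bjOrthPos T.continuous A.continuous)
    (isClosed_setOf_bjOrthPos T.continuous A.continuous.neg)
    (fun x _ => bjOrthPos_or_bjOrthPos_neg (T x) (A x))
    (exists_mem_bjOrthPos_of_normAttainSet_eq_union_neg hMT hTA.1)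
    (exists_mem_bjOrthPos_of_normAttainSet_eq_union_neg hMT hTA.2)
  exact ⟨x, hxD, bjOrth_iff_bjOrthPos_and_bjOrthPos_neg.mpr hx⟩

theorem sain_paul_corollary {X : Type*} [NormedAddCommGroup X] [NormedSpace ℝ X]
    [FiniteDimensional ℝ X] (T A : X →L[ℝ] X) (D : Set X)
    (hD_sphere : D ⊆ Metric.sphere (0 : X) 1) (hD_closed : IsClosed D)
    (hD_conn : IsConnected D) (hMT : normAttainSet T = D ∪ (-D))
    (hTA : BJOrth T A) :
    ∃ x ∈ D, BJOrth (T x) (A x) :=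
  sain_paul_corollary_general T A D hD_conn hMT hTA
end

section
/- Let X be a finite dimensional strictly convex real normed linear space. If a continuous linear operator T on X is a left symmetric point of the space of operators (with the operator norm), then for each x ∈ M_T the vector Tx is a left symmetric point of X. -/
/-- `x` is a left symmetric point: `x ⊥_B y` implies `y ⊥_B x` for every `y`. -/
def LeftSymPoint {X : Type*} [NormedAddCommGroup X] [NormedSpace ℝ X] (x : X) : Prop :=
  ∀ y : X, BJOrth x y → BJOrth y x

/-!
Let `x ∈ M_T` and `T x ⊥_B y`, and pick a norm-one functional `f` with `f x = 1`. The rank-one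
operator `A = f ⊗ y` satisfies `T ⊥_B A`, since `‖(T + λA) x‖ = ‖T x + λ y‖ ≥ ‖T‖`; left symmetry
of `T` gives `A ⊥_B T`. In finite dimension, a compactness argument produces, for each sign, a
vector `u` in the unit ball with `‖A u + λ T u‖ ≥ ‖A‖` for all `λ` of that sign. Such a `u` attains
the norm of `A`, and by strict convexity `f` attains its norm only at `± x`, so `u = ± x`. This is
exactly `y ⊥_B T x`.
-/

open Filter Topology Metric ContinuousLinearMap

section

variable {E F : Type*} [NormedAddCommGroup E] [NormedSpace ℝ E]
  [NormedAddCommGroup F] [NormedSpace ℝ F]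

theorem bjOrth_of_forall_nonneg {x y : E} (h₁ : ∀ l : ℝ, 0 ≤ l → ‖x‖ ≤ ‖x + l • y‖)
    (h₂ : ∀ l : ℝ, 0 ≤ l → ‖x‖ ≤ ‖x + l • -y‖) : BJOrth x y := by
  intro l
  rcases le_total 0 l with hl | hl
  · exact h₁ l hl
  · simpa using h₂ (-l) (neg_nonneg.2 hl)

/-- Convexity of `λ ↦ ‖a + λ • b‖`. -/
theorem le_norm_add_smul_of_le_norm_add_smul {a b : F} {N t l : ℝ} (ha : ‖a‖ ≤ N) (ht : 0 < t)
    (htl : t ≤ l) (h : N ≤ ‖a + t • b‖) : N ≤ ‖a + l • b‖ := by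
  have hl : 0 < l := ht.trans_le htl
  set s := t / l
  have hs : 0 < s := div_pos ht hl
  have hs1 : s ≤ 1 := (div_le_one hl).2 htl
  have hdecomp : a + t • b = (1 - s) • a + s • (a + l • b) := by
    rw [smul_add, smul_smul, div_mul_cancel₀ t hl.ne']
    module
  have hconv : ‖a + t • b‖ ≤ (1 - s) * ‖a‖ + s * ‖a + l • b‖ := by
    rw [hdecomp]
    refine (norm_add_le _ _).trans_eq ?_
    rw [norm_smul, norm_smul, Real.norm_of_nonneg (sub_nonneg.2 hs1), Real.norm_of_nonneg hs.le]
  have : s * N ≤ s * ‖a + l • b‖ := by nlinarith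
  exact le_of_mul_le_mul_left this hs

theorem ContinuousLinearMap.exists_norm_le_one_norm_apply_eq_opNorm [FiniteDimensional ℝ E]
    (B : E →L[ℝ] F) : ∃ u : E, ‖u‖ ≤ 1 ∧ ‖B u‖ = ‖B‖ := by
  obtain ⟨u, hu, hmax⟩ := (isCompact_closedBall (0 : E) 1).exists_isMaxOn
    (nonempty_closedBall.2 zero_le_one) B.continuous.norm.continuousOn
  rw [mem_closedBall_zero_iff] at hu
  refine ⟨u, hu, le_antisymm (B.unit_le_opNorm u hu) ?_⟩
  exact opNorm_le_of_unit_norm (norm_nonneg _) fun z hz =>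
    hmax (mem_closedBall_zero_iff.2 hz.le)

/-- One half of the Bhatia–Šemrl characterization of `A ⊥_B T` in finite dimension. -/
theorem exists_norm_le_one_forall_nonneg_opNorm_le_norm_add_smul [FiniteDimensional ℝ E]
    {A T : E →L[ℝ] F} (h : ∀ l : ℝ, 0 < l → ‖A‖ ≤ ‖A + l • T‖) :
    ∃ u : E, ‖u‖ ≤ 1 ∧ ∀ l : ℝ, 0 ≤ l → ‖A‖ ≤ ‖A u + l • T u‖ := by
  have approx : ∀ t : ℝ, 0 < t →
      ∃ v : E, ‖v‖ ≤ 1 ∧ ∀ l : ℝ, t ≤ l → ‖A‖ ≤ ‖A v + l • T v‖ := by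
    intro t ht
    obtain ⟨v, hv, hAv⟩ := (A + t • T).exists_norm_le_one_norm_apply_eq_opNorm
    refine ⟨v, hv, fun l hl =>
      le_norm_add_smul_of_le_norm_add_smul (A.unit_le_opNorm v hv) ht hl ?_⟩
    simpa using (h t ht).trans_eq hAv.symm
  choose v hv hAv using fun n : ℕ => approx (1 / ((n : ℝ) + 1)) Nat.one_div_pos_of_nat
  obtain ⟨u, hu, φ, hφ, hvu⟩ := (isCompact_closedBall (0 : E) 1).tendsto_subseq
    fun n => mem_closedBall_zero_iff.2 (hv n)
  refine ⟨u, mem_closedBall_zero_iff.1 hu, fun l hl => ?_⟩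
  -- approach `l` from above by parameters at which the estimate for `v (φ n)` is known
  set s : ℕ → ℝ := fun n => max l (1 / ((φ n : ℝ) + 1))
  have hs : Tendsto s atTop (𝓝 l) := by
    have h0 := (tendsto_one_div_add_atTop_nhds_zero_nat (𝕜 := ℝ)).comp hφ.tendsto_atTop
    have := (tendsto_const_nhds (x := l)).max h0
    rwa [max_eq_left hl] at this
  have hcont : Continuous fun p : E × ℝ => ‖A p.1 + p.2 • T p.1‖ := by fun_prop
  exact ge_of_tendsto' ((hcont.tendsto (u, l)).comp (hvu.prodMk_nhds hs))
    fun n => hAv (φ n) (s n) (le_max_right _ _)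

theorem StrictConvexSpace.eq_smul_of_abs_apply_eq_one [StrictConvexSpace ℝ E]
    {f : StrongDual ℝ E} (hf : ‖f‖ ≤ 1) {x u : E} (hx : ‖x‖ = 1) (hfx : f x = 1)
    (hu : ‖u‖ ≤ 1) (hfu : |f u| = 1) : u = f u • x := by
  have hf_le : ∀ z, f z ≤ ‖z‖ := fun z =>
    (le_abs_self _).trans ((f.le_of_opNorm_le hf z).trans_eq (one_mul _))
  have hsq : f u * f u = 1 := by rw [← sq, ← sq_abs, hfu, one_pow]
  set v := f u • u
  have hfv : f v = 1 := by rw [map_smul, smul_eq_mul, hsq]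
  have hv : ‖v‖ ≤ 1 := by rwa [norm_smul, Real.norm_eq_abs, hfu, one_mul]
  have hxv : 2 ≤ ‖x + v‖ := by simpa [hfx, hfv, one_add_one_eq_two] using hf_le (x + v)
  have hv1 : ‖v‖ = 1 := le_antisymm hv (by linarith [norm_add_le x v])
  have : x = v := eq_of_norm_eq_of_norm_add_eq (hx.trans hv1.symm)
    (le_antisymm (norm_add_le x v) (by linarith))
  rw [this, smul_smul, hsq, one_smul]

theorem norm_le_norm_add_smul_apply_of_smulRight [FiniteDimensional ℝ E] [StrictConvexSpace ℝ E]
    {f : StrongDual ℝ E} (hf : ‖f‖ = 1) {x : E} {y : F} (hx : ‖x‖ = 1) (hfx : f x = 1)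
    (hy : y ≠ 0) {S : E →L[ℝ] F} (h : ∀ l : ℝ, 0 < l → ‖f.smulRight y‖ ≤ ‖f.smulRight y + l • S‖) :
    ∀ l : ℝ, 0 ≤ l → ‖y‖ ≤ ‖y + l • S x‖ := by
  obtain ⟨u, hu, hAu⟩ := exists_norm_le_one_forall_nonneg_opNorm_le_norm_add_smul h
  simp only [norm_smulRight_apply, hf, one_mul, smulRight_apply] at hAu
  have hfu : |f u| = 1 := by
    refine le_antisymm ((f.le_of_opNorm_le hf.le u).trans (by simpa using hu)) ?_
    have := hAu 0 le_rfl
    rw [zero_smul, add_zero, norm_smul, Real.norm_eq_abs] at this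
    exact (le_mul_iff_one_le_left (norm_pos_iff.2 hy)).1 this
  have hux := StrictConvexSpace.eq_smul_of_abs_apply_eq_one hf.le hx hfx hu hfu
  have hSu : S u = f u • S x := by rw [← map_smul, ← hux]
  intro l hl
  calc ‖y‖ ≤ ‖f u • y + l • S u‖ := hAu l hl
    _ = ‖y + l • S x‖ := by
      rw [hSu, smul_comm l, ← smul_add, norm_smul, Real.norm_eq_abs, hfu, one_mul]

end

theorem leftSym_operator_image {X : Type*} [NormedAddCommGroup X] [NormedSpace ℝ X]
    [FiniteDimensional ℝ X] [StrictConvexSpace ℝ X] (T : X →L[ℝ] X)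
    (hT : LeftSymPoint T) :
    ∀ x ∈ normAttainSet T, LeftSymPoint (T x) := by
  rintro x ⟨hx, hTx⟩ y hy
  rcases eq_or_ne y 0 with rfl | hy0
  · intro l
    simp
  obtain ⟨f, hf, hfx⟩ := exists_dual_vector ℝ x (by rw [hx]; exact one_ne_zero)
  replace hfx : f x = 1 := by simpa [hx] using hfx
  have hTA : BJOrth T (f.smulRight y) := fun l =>
    calc ‖T‖ = ‖T x‖ := hTx.symm
      _ ≤ ‖T x + l • y‖ := hy l
      _ = ‖(T + l • f.smulRight y) x‖ := by simp [hfx]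
      _ ≤ ‖T + l • f.smulRight y‖ := unit_le_opNorm _ x hx.le
  have hAT := hT _ hTA
  refine bjOrth_of_forall_nonneg
    (norm_le_norm_add_smul_apply_of_smulRight hf hx hfx hy0 fun l _ => hAT l) ?_
  simpa using norm_le_norm_add_smul_apply_of_smulRight (S := -T) hf hx hfx hy0
    fun l _ => by simpa using hAT (-l)
end

section
/- Let H be a finite dimensional real Hilbert space (of dimension at least 2). Then the space L(L(H)) of continuous linear operators on L(H), where L(H) is the space of continuous linear operators on H with the operator norm, has no nonzero left symmetric point with respect to Birkhoff-James orthogonality. -/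
/-!
Let `𝒯 ≠ 0` be left symmetric and let `‖A₁‖ = 1` with `‖𝒯 A₁‖ = ‖𝒯‖`. Every `𝒜` with `𝒜 A₁ = 0`
satisfies `𝒯 ⊥_B 𝒜`, hence `𝒜 ⊥_B 𝒯`. If some unit `x, y` had `⟪𝒯 A₁ x, y⟫ = 0` while
`ψ B := ⟪y, 𝒯 B x⟫` is not identically zero, then `𝒜 := ψ ⊗ (x ⊗ y)` vanishes at `A₁`, yet
`‖𝒜 - λ 𝒯‖ < ‖𝒜‖` for `λ = ‖ψ‖² / (‖ψ‖² + ‖𝒯‖²)`. So `𝒯 B x` is always a multiple of `𝒯 A₁ x`,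
which forces `𝒯 = γ ⊗ V` with `V = 𝒯 A₁`, and then `V` is a nonzero left symmetric point of `L(H)`.
The same argument one level down shows that such a `V` has rank one, `V = u ⊗ v`; unit vectors
`d ⊥ u` and `f₁ ⊥ v` then give an explicit `A` with `V ⊥_B A` but not `A ⊥_B V`.
-/

open scoped RealInnerProductSpace
open Module Submodule

theorem LinearMap.exists_eq_smul_of_forall_mem_span_singleton {K M N : Type*} [Field K]
    [AddCommGroup M] [Module K M] [AddCommGroup N] [Module K N] {S V : M →ₗ[K] N}
    (h : ∀ x, S x ∈ K ∙ V x) : ∃ c : K, S = c • V := by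
  have hS : ∀ x, ∃ c : K, S x = c • V x := fun x =>
    (mem_span_singleton.1 (h x)).imp fun _ hc => hc.symm
  by_cases hV : V = 0
  · refine ⟨0, LinearMap.ext fun x => ?_⟩
    obtain ⟨c, hc⟩ := hS x
    simp [hc, hV]
  obtain ⟨x₀, hx₀⟩ : ∃ x₀, V x₀ ≠ 0 := by
    by_contra! h
    exact hV (LinearMap.ext h)
  obtain ⟨c, hc⟩ := hS x₀
  refine ⟨c, LinearMap.ext fun x => ?_⟩
  by_cases hdep : V x ∈ K ∙ V x₀
  · obtain ⟨t, ht⟩ := mem_span_singleton.1 hdep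
    obtain ⟨e, he⟩ := hS (x - t • x₀)
    have hker : S (x - t • x₀) = 0 := by simp [he, ht]
    rw [map_sub, map_smul, sub_eq_zero, hc, smul_smul] at hker
    rw [LinearMap.smul_apply, hker, ← ht, smul_smul, mul_comm]
  · obtain ⟨d, hd⟩ := hS x
    obtain ⟨e, he⟩ := hS (x + x₀)
    have hind : LinearIndependent K ![V x₀, V x] :=
      (LinearIndependent.pair_iff' hx₀).2 fun a ha => hdep (mem_span_singleton.2 ⟨a, ha⟩)
    obtain ⟨hce, hde⟩ := LinearIndependent.pair_iff.1 hind (c - e) (d - e) <| by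
      rw [map_add, hd, hc, map_add] at he
      linear_combination (norm := module) he
    rw [LinearMap.smul_apply, hd, sub_eq_zero.1 hde, sub_eq_zero.1 hce]

section Normed

variable {E X : Type*} [NormedAddCommGroup E] [NormedSpace ℝ E]
  [NormedAddCommGroup X] [NormedSpace ℝ X]

theorem bjOrth_zero_right (x : X) : BJOrth x 0 := fun l => by simp

theorem ContinuousLinearMap.bjOrth_of_bjOrth_apply {T A : E →L[ℝ] X} {x : E} (hx : ‖x‖ = 1)
    (hTx : ‖T x‖ = ‖T‖) (h : BJOrth (T x) (A x)) : BJOrth T A := fun l =>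
  calc ‖T‖ = ‖T x‖ := hTx.symm
    _ ≤ ‖(T + l • A) x‖ := h l
    _ ≤ ‖T + l • A‖ := by simpa [hx] using (T + l • A).le_opNorm x

theorem LeftSymPoint.norm_le_norm_sub_smul {T A : E →L[ℝ] X} (hT : LeftSymPoint T) {x : E}
    (hx : ‖x‖ = 1) (hTx : ‖T x‖ = ‖T‖) (hA : A x = 0) (l : ℝ) : ‖A‖ ≤ ‖A - l • T‖ := by
  simpa [sub_eq_add_neg] using
    hT A (T.bjOrth_of_bjOrth_apply hx hTx (by rw [hA]; exact bjOrth_zero_right _)) (-l)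

theorem bjOrth_smulRight_iff {γ : E →L[ℝ] ℝ} (hγ : γ ≠ 0) {u v : X} :
    BJOrth (γ.smulRight u) (γ.smulRight v) ↔ BJOrth u v := by
  have key : ∀ l : ℝ, γ.smulRight u + l • γ.smulRight v = γ.smulRight (u + l • v) :=
    fun l => by
      ext z
      simp only [add_apply, smul_apply, ContinuousLinearMap.smulRight_apply]
      module
  simp only [BJOrth, key, ContinuousLinearMap.norm_smulRight_apply]
  exact forall_congr' fun l => mul_le_mul_iff_right₀ (norm_pos_iff.2 hγ)

theorem LeftSymPoint.of_smulRight {γ : E →L[ℝ] ℝ} (hγ : γ ≠ 0) {v : X}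
    (h : LeftSymPoint (γ.smulRight v)) : LeftSymPoint v := fun _ hvu =>
  (bjOrth_smulRight_iff hγ).1 (h _ ((bjOrth_smulRight_iff hγ).2 hvu))

theorem ContinuousLinearMap.exists_norm_eq_one_norm_apply_eq [FiniteDimensional ℝ E]
    [Nontrivial E] (T : E →L[ℝ] X) : ∃ x, ‖x‖ = 1 ∧ ‖T x‖ = ‖T‖ := by
  have hK : IsCompact ((fun x => ‖T x‖) '' Metric.sphere (0 : E) 1) :=
    (isCompact_sphere 0 1).image (by fun_prop)
  obtain ⟨x, hx, hTx⟩ := hK.sSup_mem ((NormedSpace.sphere_nonempty.2 zero_le_one).image _)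
  exact ⟨x, mem_sphere_zero_iff_norm.1 hx, hTx.trans T.sSup_sphere_eq_norm⟩

theorem ContinuousLinearMap.exists_eq_smulRight_of_forall_mem_span {T : E →L[ℝ] X} {v : X}
    (hv : v ≠ 0) (h : ∀ z, T z ∈ ℝ ∙ v) : ∃ γ : E →L[ℝ] ℝ, T = γ.smulRight v :=
  ⟨(ContinuousLinearEquiv.coord ℝ v hv).comp (T.codRestrict _ h), by
    ext z
    exact (congrArg Subtype.val
      (ContinuousLinearEquiv.toSpanNonzeroSingleton_coord ℝ hv ⟨T z, h z⟩)).symm⟩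

end Normed

section Inner

variable {E F : Type*} [NormedAddCommGroup E] [NormedSpace ℝ E]
  [NormedAddCommGroup F] [InnerProductSpace ℝ F]

theorem bjOrth_of_inner_eq_zero {x y : F} (h : ⟪x, y⟫ = 0) : BJOrth x y := fun l => by
  have hxy := norm_add_sq_eq_norm_sq_add_norm_sq_real (x := x) (y := l • y)
    (by rw [real_inner_smul_right, h, mul_zero])
  exact (mul_self_le_mul_self_iff (norm_nonneg _) (norm_nonneg _)).2
    (hxy ▸ le_add_of_nonneg_right (mul_self_nonneg _))

theorem mem_span_singleton_of_forall_inner_eq_zero {v w : F}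
    (h : ∀ y, ‖y‖ = 1 → ⟪v, y⟫ = 0 → ⟪w, y⟫ = 0) : w ∈ ℝ ∙ v := by
  rw [← (ℝ ∙ v).orthogonal_orthogonal]
  intro y hy
  rcases eq_or_ne y 0 with rfl | hy0
  · exact inner_zero_left w
  have hwy := h (‖y‖⁻¹ • y) (norm_smul_inv_norm hy0)
    (by rw [real_inner_smul_right, mem_orthogonal_singleton_iff_inner_right.1 hy, mul_zero])
  rwa [real_inner_smul_right, mul_eq_zero, or_iff_right (inv_ne_zero (norm_ne_zero_iff.2 hy0)),
    real_inner_comm] at hwy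

theorem exists_norm_eq_one_inner_eq_zero [FiniteDimensional ℝ F] (hF : 2 ≤ finrank ℝ F)
    (p : F) : ∃ q : F, ‖q‖ = 1 ∧ ⟪p, q⟫ = 0 := by
  have hp : finrank ℝ (ℝ ∙ p) ≤ 1 := by simpa using finrank_span_le_card (R := ℝ) {p}
  have := (ℝ ∙ p).finrank_add_finrank_orthogonal
  have : Nontrivial (ℝ ∙ p)ᗮ := Module.nontrivial_of_finrank_pos (R := ℝ) (by omega)
  obtain ⟨q, hq⟩ := exists_norm_eq (ℝ ∙ p)ᗮ zero_le_one
  exact ⟨q, hq, mem_orthogonal_singleton_iff_inner_right.1 q.2⟩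

theorem norm_smul_sub_smul_le {y v : F} (hy : ‖y‖ = 1) {s e k r p q lam : ℝ} (hk : 0 < k)
    (hlam : lam * (k ^ 2 + r ^ 2) = k ^ 2) (hq : 0 ≤ q) (hyv : ⟪y, v⟫ = s + e)
    (hs : |s| ≤ k * p) (he : e ^ 2 ≤ r ^ 2 * (q ^ 2 - p ^ 2)) (hv : ‖v‖ ≤ r * q) :
    ‖s • y - lam • v‖ ≤ k * √(1 - lam ^ 2) * q := by
  have hlam' : lam = k ^ 2 / (k ^ 2 + r ^ 2) := eq_div_of_mul_eq (by positivity) hlam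
  have hlam0 : 0 ≤ lam := by rw [hlam']; positivity
  have hlam1 : lam ≤ 1 := by
    rw [hlam', div_le_one (by positivity)]
    linarith [sq_nonneg r]
  have hs2 : s ^ 2 ≤ k ^ 2 * p ^ 2 := by
    simpa [sq_abs, mul_pow] using pow_le_pow_left₀ (abs_nonneg s) hs 2
  have hv2 : ‖v‖ ^ 2 ≤ r ^ 2 * q ^ 2 := by
    simpa [mul_pow] using pow_le_pow_left₀ (norm_nonneg v) hv 2
  have hsq : ‖s • y - lam • v‖ ^ 2 = s ^ 2 - 2 * lam * s * (s + e) + lam ^ 2 * ‖v‖ ^ 2 := by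
    rw [norm_sub_sq_real, real_inner_smul_left, real_inner_smul_right, hyv, norm_smul,
      norm_smul, hy, Real.norm_eq_abs, Real.norm_eq_abs, mul_pow, mul_pow, sq_abs, sq_abs]
    ring
  refine (pow_le_pow_iff_left₀ (norm_nonneg _) (by positivity) two_ne_zero).1 ?_
  rw [hsq, mul_pow, mul_pow, Real.sq_sqrt (by nlinarith)]
  -- `-2 lam s e ≤ lam (s ^ 2 + e ^ 2)`; by `hlam` the coefficient of `p ^ 2` then vanishes
  linear_combination mul_le_mul_of_nonneg_left hs2 (sub_nonneg.2 hlam1)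
    + mul_le_mul_of_nonneg_left he hlam0 + mul_le_mul_of_nonneg_left hv2 (sq_nonneg lam)
    + mul_nonneg hlam0 (sq_nonneg (s + e)) + ((1 + lam) * q ^ 2 - p ^ 2) * hlam

variable {G : Type*} [NormedAddCommGroup G] [InnerProductSpace ℝ G]

theorem norm_smul_innerSL_smulRight_sub_smul_le {x : G} {y : F} (hx : ‖x‖ = 1) (hy : ‖y‖ = 1)
    {D : G →L[ℝ] F} {t k r lam β : ℝ} (hk : 0 < k) (hlam : lam * (k ^ 2 + r ^ 2) = k ^ 2)
    (hDx : ⟪y, D x⟫ = t) (ht : |t| ≤ k * β) (hD : ‖D‖ ≤ r * β) :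
    ‖t • (innerSL ℝ x).smulRight y - lam • D‖ ≤ k * √(1 - lam ^ 2) * β := by
  have hβ : 0 ≤ β := nonneg_of_mul_nonneg_right ((abs_nonneg t).trans ht) hk
  refine ContinuousLinearMap.opNorm_le_bound _ (by positivity) fun z => ?_
  set a := ⟪x, z⟫
  set w := z - a • x
  have hw : ‖w‖ ^ 2 = ‖z‖ ^ 2 - a ^ 2 := by
    rw [norm_sub_sq_real, real_inner_smul_right, norm_smul, hx, real_inner_comm,
      Real.norm_eq_abs, mul_one, sq_abs]
    ring
  have hDw : |⟪y, D w⟫| ≤ r * β * ‖w‖ :=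
    (abs_real_inner_le_norm _ _).trans (by rw [hy, one_mul]; exact D.le_of_opNorm_le hD w)
  have happ : (t • (innerSL ℝ x).smulRight y - lam • D) z = (t * a) • y - lam • D z := by
    simp [a, smul_smul]
  rw [happ, mul_assoc]
  refine norm_smul_sub_smul_le hy hk hlam (by positivity) (e := ⟪y, D w⟫) (p := β * |a|)
    ?_ ?_ ?_ ((D.le_of_opNorm_le hD z).trans_eq (mul_assoc _ _ _))
  · simp only [w, map_sub, map_smul, inner_sub_right, real_inner_smul_right, hDx]
    ring
  · rw [abs_mul, ← mul_assoc]
    exact mul_le_mul_of_nonneg_right ht (abs_nonneg a)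
  · calc ⟪y, D w⟫ ^ 2 = |⟪y, D w⟫| ^ 2 := (sq_abs _).symm
      _ ≤ (r * β * ‖w‖) ^ 2 := pow_le_pow_left₀ (abs_nonneg _) hDw 2
      _ = r ^ 2 * ((β * ‖z‖) ^ 2 - (β * |a|) ^ 2) := by
        rw [mul_pow, hw, mul_pow, mul_pow, mul_pow, sq_abs]
        ring

theorem LeftSymPoint.inner_apply_eq_zero {T : E →L[ℝ] F} (hT : LeftSymPoint T) {x₁ : E}
    (hx₁ : ‖x₁‖ = 1) (hTx₁ : ‖T x₁‖ = ‖T‖) {y : F} (hy1 : ‖y‖ = 1) (hy : ⟪T x₁, y⟫ = 0)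
    (z : E) : ⟪T z, y⟫ = 0 := by
  by_contra hz
  set ψ : E →L[ℝ] ℝ := (innerSL ℝ y).comp T
  have hψ : ∀ w, ψ w = ⟪y, T w⟫ := fun w => rfl
  have hk : 0 < ‖ψ‖ := norm_pos_iff.2 fun h => hz (by rw [real_inner_comm, ← hψ, h]; rfl)
  set lam := ‖ψ‖ ^ 2 / (‖ψ‖ ^ 2 + ‖T‖ ^ 2)
  have hlam : lam * (‖ψ‖ ^ 2 + ‖T‖ ^ 2) = ‖ψ‖ ^ 2 := div_mul_cancel₀ _ (by positivity)
  have hA : ψ.smulRight y x₁ = 0 := by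
    rw [ContinuousLinearMap.smulRight_apply, hψ, real_inner_comm, hy, zero_smul]
  have hle : ‖ψ.smulRight y - lam • T‖ ≤ ‖ψ‖ * √(1 - lam ^ 2) :=
    ContinuousLinearMap.opNorm_le_bound _ (by positivity) fun w =>
      norm_smul_sub_smul_le hy1 hk hlam (norm_nonneg w) (e := 0) (by rw [add_zero]; rfl)
        (by simpa [Real.norm_eq_abs] using ψ.le_opNorm w) (by simp) (T.le_opNorm w)
  have hlt : ‖ψ‖ * √(1 - lam ^ 2) < ‖ψ.smulRight y‖ := by
    rw [ContinuousLinearMap.norm_smulRight_apply, hy1, mul_one]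
    exact mul_lt_of_lt_one_right hk
      ((Real.sqrt_lt' one_pos).2 (by nlinarith [show 0 < lam by positivity]))
  exact (hT.norm_le_norm_sub_smul hx₁ hTx₁ hA lam).not_gt (hle.trans_lt hlt)

theorem LeftSymPoint.inner_apply_apply_eq_zero {𝒯 : E →L[ℝ] G →L[ℝ] F} (h𝒯 : LeftSymPoint 𝒯)
    {A₁ : E} (hA₁ : ‖A₁‖ = 1) (h𝒯A₁ : ‖𝒯 A₁‖ = ‖𝒯‖) {x : G} {y : F} (hy1 : ‖y‖ = 1)
    (hxy : ⟪𝒯 A₁ x, y⟫ = 0) (B : E) : ⟪𝒯 B x, y⟫ = 0 := by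
  wlog hx1 : ‖x‖ = 1 generalizing x
  · rcases eq_or_ne x 0 with rfl | hx0
    · simp
    have hB := this (x := ‖x‖⁻¹ • x) (by rw [map_smul, real_inner_smul_left, hxy, mul_zero])
      (norm_smul_inv_norm hx0)
    rwa [map_smul, real_inner_smul_left, mul_eq_zero,
      or_iff_right (inv_ne_zero (norm_ne_zero_iff.2 hx0))] at hB
  by_contra hB
  set ψ : E →L[ℝ] ℝ := (innerSL ℝ y).comp ((ContinuousLinearMap.apply ℝ F x).comp 𝒯)
  have hψ : ∀ B, ψ B = ⟪y, 𝒯 B x⟫ := fun B => rfl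
  have hk : 0 < ‖ψ‖ := norm_pos_iff.2 fun h => hB (by rw [real_inner_comm, ← hψ, h]; rfl)
  set lam := ‖ψ‖ ^ 2 / (‖ψ‖ ^ 2 + ‖𝒯‖ ^ 2)
  have hlam : lam * (‖ψ‖ ^ 2 + ‖𝒯‖ ^ 2) = ‖ψ‖ ^ 2 := div_mul_cancel₀ _ (by positivity)
  set C : G →L[ℝ] F := (innerSL ℝ x).smulRight y
  have hA : ψ.smulRight C A₁ = 0 := by
    rw [ContinuousLinearMap.smulRight_apply, hψ, real_inner_comm, hxy, zero_smul]
  have hle : ‖ψ.smulRight C - lam • 𝒯‖ ≤ ‖ψ‖ * √(1 - lam ^ 2) :=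
    ContinuousLinearMap.opNorm_le_bound _ (by positivity) fun B =>
      norm_smul_innerSL_smulRight_sub_smul_le hx1 hy1 hk hlam (hψ B).symm
        (by simpa [Real.norm_eq_abs] using ψ.le_opNorm B) (𝒯.le_opNorm B)
  have hlt : ‖ψ‖ * √(1 - lam ^ 2) < ‖ψ.smulRight C‖ := by
    rw [ContinuousLinearMap.norm_smulRight_apply, ContinuousLinearMap.norm_smulRight_apply,
      innerSL_apply_norm, hx1, hy1, mul_one, mul_one]
    exact mul_lt_of_lt_one_right hk
      ((Real.sqrt_lt' one_pos).2 (by nlinarith [show 0 < lam by positivity]))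
  exact (h𝒯.norm_le_norm_sub_smul hA₁ h𝒯A₁ hA lam).not_gt (hle.trans_lt hlt)

theorem norm_smul_add_smul_sq {e₁ e₂ : F} (h₁ : ‖e₁‖ = 1) (h₂ : ‖e₂‖ = 1) (h : ⟪e₁, e₂⟫ = 0)
    (a b : ℝ) : ‖a • e₁ + b • e₂‖ ^ 2 = a ^ 2 + b ^ 2 := by
  rw [norm_add_sq_real, norm_smul, norm_smul, real_inner_smul_left, real_inner_smul_right, h,
    h₁, h₂, Real.norm_eq_abs, Real.norm_eq_abs]
  simp

theorem inner_sq_add_inner_sq_le {e₁ e₂ : F} (h₁ : ‖e₁‖ = 1) (h₂ : ‖e₂‖ = 1) (h : ⟪e₁, e₂⟫ = 0)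
    (z : F) : ⟪e₁, z⟫ ^ 2 + ⟪e₂, z⟫ ^ 2 ≤ ‖z‖ ^ 2 := by
  have hon : Orthonormal ℝ ![e₁, e₂] := by
    rw [orthonormal_iff_ite]
    intro i j
    fin_cases i <;> fin_cases j <;> simp [h₁, h₂, h, real_inner_comm e₁ e₂]
  simpa [Fin.sum_univ_two] using hon.sum_inner_products_le (s := Finset.univ) (x := z)

theorem norm_innerSL_smulRight_sub_add_le {u d : G} (hu : ‖u‖ = 1) (hd : ‖d‖ = 1)
    (hud : ⟪u, d⟫ = 0) {e₁ e₂ : F} (he₁ : ‖e₁‖ = 1) (he₂ : ‖e₂‖ = 1) (he : ⟪e₁, e₂⟫ = 0) :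
    ‖(innerSL ℝ u).smulRight (e₁ - e₂) + (innerSL ℝ d).smulRight (e₁ + e₂)‖ ≤ √2 := by
  refine ContinuousLinearMap.opNorm_le_bound _ (by positivity) fun z => ?_
  have happ : ((innerSL ℝ u).smulRight (e₁ - e₂) + (innerSL ℝ d).smulRight (e₁ + e₂)) z
      = (⟪u, z⟫ + ⟪d, z⟫) • e₁ + (⟪d, z⟫ - ⟪u, z⟫) • e₂ := by
    simp only [add_apply, ContinuousLinearMap.smulRight_apply, innerSL_apply_apply]
    module
  refine (pow_le_pow_iff_left₀ (norm_nonneg _) (by positivity) two_ne_zero).1 ?_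
  rw [happ, norm_smul_add_smul_sq he₁ he₂ he, mul_pow, Real.sq_sqrt zero_le_two]
  nlinarith [inner_sq_add_inner_sq_le hu hd hud z]

theorem not_leftSymPoint_innerSL_smulRight [FiniteDimensional ℝ G] [FiniteDimensional ℝ F]
    (hG : 2 ≤ finrank ℝ G) (hF : 2 ≤ finrank ℝ F) {u : G} (hu : ‖u‖ = 1) {v : F} (hv : v ≠ 0) :
    ¬LeftSymPoint ((innerSL ℝ u).smulRight v) := by
  intro hT
  set T := (innerSL ℝ u).smulRight v
  obtain ⟨f₁, hf₁, hvf₁⟩ := exists_norm_eq_one_inner_eq_zero hF v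
  obtain ⟨d, hd, hud⟩ := exists_norm_eq_one_inner_eq_zero hG u
  set f₂ := ‖v‖⁻¹ • v
  have hf₂ : ‖f₂‖ = 1 := norm_smul_inv_norm hv
  have hf₁₂ : ⟪f₁, f₂⟫ = 0 := by rw [real_inner_smul_right, real_inner_comm, hvf₁, mul_zero]
  have huu : ⟪u, u⟫ = 1 := by rw [real_inner_self_eq_norm_sq, hu, one_pow]
  have hdd : ⟪d, d⟫ = 1 := by rw [real_inner_self_eq_norm_sq, hd, one_pow]
  have hdu : ⟪d, u⟫ = 0 := by rw [real_inner_comm, hud]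
  have hTu : T u = v := by
    rw [ContinuousLinearMap.smulRight_apply, innerSL_apply_apply, huu, one_smul]
  have hTn : ‖T‖ = ‖v‖ := by
    rw [ContinuousLinearMap.norm_smulRight_apply, innerSL_apply_norm, hu, one_mul]
  -- `T ⊥_B A` as `A u = f₁ ⊥ T u`, but `‖A - ‖v‖⁻¹ • T‖ ≤ √2 < √5 / √2 ≤ ‖A‖`,
  -- the last step because `A (u + d) = 2 f₁ + f₂`
  set A := (innerSL ℝ u).smulRight f₁ + (innerSL ℝ d).smulRight (f₁ + f₂)
  have hA : ∀ z, A z = ⟪u, z⟫ • f₁ + ⟪d, z⟫ • (f₁ + f₂) := fun z => rfl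
  have hTA : BJOrth T A := T.bjOrth_of_bjOrth_apply hu (by rw [hTu, hTn]) (by
    rw [hTu, hA, huu, hdu, one_smul, zero_smul, add_zero]
    exact bjOrth_of_inner_eq_zero hvf₁)
  have hAT : A + (-‖v‖⁻¹) • T
      = (innerSL ℝ u).smulRight (f₁ - f₂) + (innerSL ℝ d).smulRight (f₁ + f₂) := by
    ext z
    simp only [add_apply, smul_apply, hA, T, f₂, ContinuousLinearMap.smulRight_apply,
      innerSL_apply_apply]
    module
  have hA2 : ‖A‖ ^ 2 ≤ 2 := by
    have := (hT A hTA (-‖v‖⁻¹)).trans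
      (hAT ▸ norm_innerSL_smulRight_sub_add_le hu hd hud hf₁ hf₂ hf₁₂)
    simpa using pow_le_pow_left₀ (norm_nonneg _) this 2
  have hAud : A (u + d) = (2 : ℝ) • f₁ + (1 : ℝ) • f₂ := by
    rw [hA, inner_add_right, inner_add_right, huu, hud, hdu, hdd]
    module
  have hle := pow_le_pow_left₀ (norm_nonneg _) (A.le_opNorm (u + d)) 2
  rw [hAud, mul_pow, ← one_smul ℝ u, ← one_smul ℝ d, norm_smul_add_smul_sq hf₁ hf₂ hf₁₂,
    norm_smul_add_smul_sq hu hd hud] at hle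
  nlinarith

theorem not_leftSymPoint_smulRight [FiniteDimensional ℝ G] [FiniteDimensional ℝ F]
    (hG : 2 ≤ finrank ℝ G) (hF : 2 ≤ finrank ℝ F) {γ : G →L[ℝ] ℝ} (hγ : γ ≠ 0) {v : F}
    (hv : v ≠ 0) : ¬LeftSymPoint (γ.smulRight v) := by
  obtain ⟨u, rfl⟩ := (InnerProductSpace.toDual ℝ G).surjective γ
  have hu : u ≠ 0 := by rintro rfl; exact hγ (map_zero _)
  have hnu : ‖u‖ ≠ 0 := norm_ne_zero_iff.2 hu
  have hγu : (InnerProductSpace.toDual ℝ G u).smulRight v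
      = (innerSL ℝ (‖u‖⁻¹ • u)).smulRight (‖u‖ • v) := by
    ext z
    simp only [ContinuousLinearMap.smulRight_apply, InnerProductSpace.toDual_apply_apply,
      innerSL_apply_apply, real_inner_smul_left, smul_smul]
    rw [mul_comm _ ⟪u, z⟫, mul_assoc, inv_mul_cancel₀ hnu, mul_one]
  rw [hγu]
  exact not_leftSymPoint_innerSL_smulRight hG hF (norm_smul_inv_norm hu) (smul_ne_zero hnu hv)

theorem ContinuousLinearMap.eq_zero_of_leftSymPoint [FiniteDimensional ℝ G]
    [FiniteDimensional ℝ F] (hG : 2 ≤ finrank ℝ G) (hF : 2 ≤ finrank ℝ F) {T : G →L[ℝ] F}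
    (hT : LeftSymPoint T) : T = 0 := by
  by_contra hT0
  have : Nontrivial G := not_subsingleton_iff_nontrivial.1 fun _ => hT0 (Subsingleton.elim _ _)
  obtain ⟨x₁, hx₁, hTx₁⟩ := T.exists_norm_eq_one_norm_apply_eq
  have hv : T x₁ ≠ 0 := fun h => hT0 (norm_eq_zero.1 (by rw [← hTx₁, h, norm_zero]))
  obtain ⟨γ, hγ⟩ := T.exists_eq_smulRight_of_forall_mem_span hv fun z =>
    mem_span_singleton_of_forall_inner_eq_zero fun y hy hTy =>
      hT.inner_apply_eq_zero hx₁ hTx₁ hy hTy z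
  have hγ0 : γ ≠ 0 := by
    rintro rfl
    exact hT0 (hγ.trans (by ext; simp))
  exact not_leftSymPoint_smulRight hG hF hγ0 hv (hγ ▸ hT)

theorem ContinuousLinearMap.eq_zero_of_leftSymPoint₂ [FiniteDimensional ℝ E]
    [FiniteDimensional ℝ G] [FiniteDimensional ℝ F] (hG : 2 ≤ finrank ℝ G)
    (hF : 2 ≤ finrank ℝ F) {𝒯 : E →L[ℝ] G →L[ℝ] F} (h𝒯 : LeftSymPoint 𝒯) : 𝒯 = 0 := by
  by_contra h𝒯0
  have : Nontrivial E := not_subsingleton_iff_nontrivial.1 fun _ => h𝒯0 (Subsingleton.elim _ _)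
  obtain ⟨A₁, hA₁, h𝒯A₁⟩ := 𝒯.exists_norm_eq_one_norm_apply_eq
  have hV : 𝒯 A₁ ≠ 0 := fun h => h𝒯0 (norm_eq_zero.1 (by rw [← h𝒯A₁, h, norm_zero]))
  have hspan : ∀ B, 𝒯 B ∈ ℝ ∙ 𝒯 A₁ := fun B => by
    obtain ⟨c, hc⟩ := LinearMap.exists_eq_smul_of_forall_mem_span_singleton
      (S := (𝒯 B : G →ₗ[ℝ] F)) (V := 𝒯 A₁) fun x =>
        mem_span_singleton_of_forall_inner_eq_zero fun y hy hxy =>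
          h𝒯.inner_apply_apply_eq_zero hA₁ h𝒯A₁ hy hxy B
    exact mem_span_singleton.2 ⟨c, ContinuousLinearMap.coe_injective hc.symm⟩
  obtain ⟨γ, hγ⟩ := 𝒯.exists_eq_smulRight_of_forall_mem_span hV hspan
  have hγ0 : γ ≠ 0 := by
    rintro rfl
    exact h𝒯0 (hγ.trans (by ext; simp))
  exact hV (eq_zero_of_leftSymPoint hG hF (LeftSymPoint.of_smulRight hγ0 (hγ ▸ h𝒯)))

end Inner

theorem no_nonzero_leftSym_in_LLH {H : Type*} [NormedAddCommGroup H]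
    [InnerProductSpace ℝ H] [FiniteDimensional ℝ H]
    (hdim : 2 ≤ Module.finrank ℝ H) :
    ∀ 𝒯 : (H →L[ℝ] H) →L[ℝ] (H →L[ℝ] H), LeftSymPoint 𝒯 → 𝒯 = 0 :=
  fun _ h𝒯 => ContinuousLinearMap.eq_zero_of_leftSymPoint₂ hdim hdim h𝒯
end

section
/- Let X be a finite dimensional strictly convex and smooth real normed linear space. Let T be a continuous linear operator on X for which there exist x, y ∈ S_X satisfying x ∈ M_T, y ⊥_B x, and Ty ≠ 0. Then T is not a left symmetric point of the space of operators (with the operator norm). -/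
/-- A smooth space: every nonzero vector has a unique norming functional. -/
def SmoothSpace (X : Type*) [NormedAddCommGroup X] [NormedSpace ℝ X] : Prop :=
  ∀ x : X, x ≠ 0 → ∃! f : X →L[ℝ] ℝ, ‖f‖ = 1 ∧ f x = ‖x‖
/-! Take a norming functional `g` of `y` with `g x = 0` (this is what `y ⊥_B x` provides) and the
rank-one operator `A = g(·) T y`. As `A x = 0` and `T` attains its norm at `x`, `T ⊥_B A`, so left
symmetry would give `A ⊥_B T`. By strict convexity `A` attains its norm only at `±y`, and for such
an operator on a finite-dimensional space `A ⊥_B T` forces `A y ⊥_B T y` by a compactness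
argument. But `A y = T y`, and `T y ⊥_B T y` means `T y = 0`. -/

open Filter Topology Metric

section
variable {X Y : Type*} [NormedAddCommGroup X] [NormedSpace ℝ X]
  [NormedAddCommGroup Y] [NormedSpace ℝ Y]

theorem ContinuousLinearMap.exists_norm_eq_one_norm_apply_eq_opNorm [ProperSpace X]
    [Nontrivial X] (f : X →L[ℝ] Y) : ∃ x : X, ‖x‖ = 1 ∧ ‖f x‖ = ‖f‖ := by
  obtain ⟨x, hx, hfx⟩ := ((isCompact_sphere (0 : X) 1).image (by fun_prop)).sSup_mem
    ((NormedSpace.sphere_nonempty.2 zero_le_one).image fun x => ‖f x‖)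
  exact ⟨x, by simpa using hx, hfx.trans f.sSup_sphere_eq_norm⟩

/-- One half of James's characterization of Birkhoff-James orthogonality. -/
theorem BJOrth.exists_dual {x y : X} (h : BJOrth y x) :
    ∃ g : StrongDual ℝ X, ‖g‖ ≤ 1 ∧ g y = ‖y‖ ∧ g x = 0 := by
  set S := ℝ ∙ x
  -- `y ⊥_B x` says exactly that `y` is as short as its class modulo `ℝ ∙ x`.
  have hnorm : ‖(Submodule.Quotient.mk y : X ⧸ S)‖ = ‖y‖ := by
    refine le_antisymm (Submodule.Quotient.norm_mk_le S y) ?_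
    refine QuotientAddGroup.le_norm_iff.2 fun m hm => ?_
    obtain ⟨a, ha⟩ := Submodule.mem_span_singleton.1 ((Submodule.Quotient.eq _).1 hm)
    rw [eq_sub_iff_add_eq'] at ha
    simpa [← ha] using h a
  have hmkQ : ‖S.mkQL‖ ≤ 1 := S.mkQL.opNorm_le_bound zero_le_one fun m => by
    simpa using Submodule.Quotient.norm_mk_le S m
  obtain ⟨f, hf, hfy⟩ := exists_dual_vector'' ℝ (Submodule.Quotient.mk y : X ⧸ S)
  refine ⟨f.comp S.mkQL, ?_, ?_, ?_⟩
  · simpa using (f.opNorm_comp_le S.mkQL).trans (mul_le_one₀ hf (norm_nonneg _) hmkQ)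
  · simpa [hnorm] using hfy
  · simp [(Submodule.Quotient.mk_eq_zero S).2 (Submodule.mem_span_singleton_self x)]

theorem eq_of_apply_eq_norm_of_norm_eq [StrictConvexSpace ℝ X] {g : StrongDual ℝ X}
    (hg : ‖g‖ ≤ 1) {y z : X} (hgy : g y = ‖y‖) (hgz : g z = ‖z‖) (hyz : ‖y‖ = ‖z‖) :
    y = z := by
  refine eq_of_norm_eq_of_norm_add_eq hyz (le_antisymm (norm_add_le y z) ?_)
  calc ‖y‖ + ‖z‖ = g (y + z) := by rw [map_add, hgy, hgz]
    _ ≤ ‖g (y + z)‖ := le_abs_self _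
    _ ≤ 1 * ‖y + z‖ := g.le_of_opNorm_le hg _
    _ = ‖y + z‖ := one_mul _

theorem eq_or_eq_neg_of_norm_smulRight_apply_eq [StrictConvexSpace ℝ X] {g : StrongDual ℝ X}
    (hg : ‖g‖ ≤ 1) {y : X} (hy : ‖y‖ = 1) (hgy : g y = 1) {v : Y} (hv : v ≠ 0) {w : X}
    (hw : ‖w‖ = 1) (h : ‖g.smulRight v w‖ = ‖g.smulRight v‖) : w = y ∨ w = -y := by
  have hg1 : ‖g‖ = 1 :=
    le_antisymm hg (by simpa [hy, hgy] using g.le_opNorm y)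
  have hgw : |g w| = 1 := by
    simpa [ContinuousLinearMap.norm_smulRight_apply, norm_smul, hg1, norm_ne_zero_iff.2 hv]
      using h
  rcases (abs_eq zero_le_one).1 hgw with hgw | hgw
  · exact .inl (eq_of_apply_eq_norm_of_norm_eq hg (by rw [hgw, hw]) (by rw [hgy, hy])
      (hw.trans hy.symm))
  · refine .inr (neg_eq_iff_eq_neg.1 (eq_of_apply_eq_norm_of_norm_eq hg ?_ (by rw [hgy, hy])
      (by rw [norm_neg, hw, hy])))
    rw [map_neg, hgw, norm_neg, hw, neg_neg]

theorem bjOrth_of_mem_normAttainSet {T A : X →L[ℝ] X} {x : X} (hx : x ∈ normAttainSet T)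
    (hAx : A x = 0) : BJOrth T A := fun l =>
  calc ‖T‖ = ‖(T + l • A) x‖ := by simp [hAx, hx.2]
    _ ≤ ‖T + l • A‖ * ‖x‖ := (T + l • A).le_opNorm x
    _ = ‖T + l • A‖ := by rw [hx.1, mul_one]

theorem eventually_norm_add_smul_apply_lt_of_norm_apply_lt (A B : X →L[ℝ] Y) {v : X}
    (hv : ‖A v‖ < ‖A‖ * ‖v‖) :
    ∀ᶠ p : ℝ × X in 𝓝 (0, v), ‖(A + p.1 • B) p.2‖ < ‖A‖ * ‖p.2‖ := by
  have hcont : Continuous fun p : ℝ × X => ‖(A + p.1 • B) p.2‖ := by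
    simp only [add_apply, smul_apply]
    fun_prop
  exact hcont.continuousAt.eventually_lt (by fun_prop) (by simpa using hv)

theorem eventually_norm_add_smul_apply_lt_of_norm_add_apply_lt (A B : X →L[ℝ] Y) {v : X}
    (hv : ‖(A + B) v‖ < ‖A‖ * ‖v‖) :
    ∀ᶠ p : ℝ × X in 𝓝 (0, v), 0 < p.1 → ‖(A + p.1 • B) p.2‖ < ‖A‖ * ‖p.2‖ := by
  have hlt : ∀ᶠ w in 𝓝 v, ‖(A + B) w‖ < ‖A‖ * ‖w‖ :=
    (A + B).continuous.norm.continuousAt.eventually_lt (by fun_prop) hv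
  filter_upwards [continuousAt_fst.eventually (gt_mem_nhds zero_lt_one),
    continuousAt_snd.eventually hlt] with ⟨s, w⟩ hs1 hw hs0
  -- `(A + s • B) w` is a convex combination of `A w` and `(A + B) w`.
  have hcomb : (A + s • B) w = (1 - s) • A w + s • (A + B) w := by
    simp only [add_apply, smul_apply]
    module
  calc ‖(A + s • B) w‖ ≤ (1 - s) * ‖A w‖ + s * ‖(A + B) w‖ := by
        rw [hcomb]
        refine (norm_add_le _ _).trans_eq ?_
        rw [norm_smul, norm_smul, Real.norm_of_nonneg (by linarith),
          Real.norm_of_nonneg hs0.le]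
    _ < (1 - s) * (‖A‖ * ‖w‖) + s * (‖A‖ * ‖w‖) := by
        have := A.le_opNorm w
        dsimp only at hs1 hs0 hw
        nlinarith
    _ = ‖A‖ * ‖w‖ := by ring

/-- A finite-dimensional form of the Bhatia-Šemrl property (Sain-Paul): it holds for operators
that attain their norm only at a single pair `±u` of unit vectors. -/
theorem BJOrth.apply_of_forall_norm_apply_eq [ProperSpace X] {A T : X →L[ℝ] Y}
    (h : BJOrth A T) {u : X} (hu : ∀ w : X, ‖w‖ = 1 → ‖A w‖ = ‖A‖ → w = u ∨ w = -u) :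
    BJOrth (A u) (T u) := by
  intro l
  by_contra! hl
  have hu0 : u ≠ 0 := by rintro rfl; simp at hl
  have : Nontrivial X := ⟨⟨u, 0, hu0⟩⟩
  have hlu : ‖(A + l • T) u‖ < ‖A‖ * ‖u‖ := by simpa using hl.trans_le (A.le_opNorm u)
  -- Away from `±u` the norm of `A` is not attained; near `±u` use convexity in `s`.
  have hloc : ∀ v ∈ sphere (0 : X) 1, ∀ᶠ p : ℝ × X in 𝓝 (0, v),
      0 < p.1 → ‖(A + p.1 • l • T) p.2‖ < ‖A‖ * ‖p.2‖ := by
    intro v hv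
    rw [mem_sphere_zero_iff_norm] at hv
    rcases (A.le_opNorm v).lt_or_eq with hlt | heq
    · filter_upwards [eventually_norm_add_smul_apply_lt_of_norm_apply_lt A (l • T) hlt]
        with p hp _ using hp
    · refine eventually_norm_add_smul_apply_lt_of_norm_add_apply_lt A (l • T) ?_
      rcases hu v hv (by rw [heq, hv, mul_one]) with rfl | rfl
      · exact hlu
      · rwa [map_neg, norm_neg, norm_neg]
  have hev := (isCompact_sphere (0 : X) 1).eventually_forall_of_forall_eventually
    (P := fun s w => 0 < s → ‖(A + s • l • T) w‖ < ‖A‖ * ‖w‖) hloc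
  obtain ⟨s, hs, hs0⟩ := ((hev.filter_mono nhdsWithin_le_nhds).and
    (self_mem_nhdsWithin (s := Set.Ioi 0))).exists
  obtain ⟨w, hw, hAw⟩ := (A + s • l • T).exists_norm_eq_one_norm_apply_eq_opNorm
  have hlt := hs w (mem_sphere_zero_iff_norm.2 hw) hs0
  rw [hAw, hw, mul_one, smul_smul] at hlt
  exact (h (s * l)).not_gt hlt

end

theorem not_leftSym_of_nonzero_on_orthogonal_general {X : Type*} [NormedAddCommGroup X]
    [NormedSpace ℝ X] [FiniteDimensional ℝ X] [StrictConvexSpace ℝ X]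
    (T : X →L[ℝ] X) (x y : X)
    (hy : ‖y‖ = 1) (hxMT : x ∈ normAttainSet T)
    (hyx : BJOrth y x) (hTy : T y ≠ 0) :
    ¬ LeftSymPoint T := by
  intro hsym
  obtain ⟨g, hg, hgy, hgx⟩ := hyx.exists_dual
  rw [hy] at hgy
  set A := g.smulRight (T y)
  have hTA : BJOrth T A := bjOrth_of_mem_normAttainSet hxMT (by simp [A, hgx])
  have hAy : BJOrth (A y) (T y) := (hsym A hTA).apply_of_forall_norm_apply_eq fun w hw hAw =>
    eq_or_eq_neg_of_norm_smulRight_apply_eq hg hy hgy hTy hw hAw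
  have hTyy : BJOrth (T y) (T y) := by simpa [A, hgy] using hAy
  exact hTy (norm_le_zero_iff.1 (by simpa using hTyy (-1)))

theorem not_leftSym_of_nonzero_on_orthogonal {X : Type*} [NormedAddCommGroup X]
    [NormedSpace ℝ X] [FiniteDimensional ℝ X] [StrictConvexSpace ℝ X]
    (hsm : SmoothSpace X) (T : X →L[ℝ] X) (x y : X)
    (hx : ‖x‖ = 1) (hy : ‖y‖ = 1) (hxMT : x ∈ normAttainSet T)
    (hyx : BJOrth y x) (hTy : T y ≠ 0) :
    ¬ LeftSymPoint T :=
  not_leftSym_of_nonzero_on_orthogonal_general T x y hy hxMT hyx hTy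
end

section
/- Let X be a finite dimensional strictly convex and smooth real normed linear space of dimension at least 2, and let T be an invertible continuous linear operator on X. Then T is not a left symmetric point of the space of operators (with the operator norm). -/
/-!
Let `‖T x‖ = ‖T‖` with `‖x‖ = 1`, and let `g` be a norm-one functional with `g x = 0`, attaining
its norm at a unit vector `z`. Then `T ⊥_B A` for the rank-one operator `A = g ⊗ T z`, since `A`
vanishes at `x`. By strict convexity `A` attains its norm `‖T z‖` only at `±z`, so `|g|` stays
below some `c < 1` away from `±z`; near `±z` we have `T x ≈ ±T z`, so subtracting a small multiple
of `T` shrinks `A` there too. Hence `‖A - μ T‖ < ‖A‖` for small `μ > 0`, and `A` is not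
orthogonal to `T`.
-/

section

variable {X Y : Type*} [NormedAddCommGroup X] [NormedSpace ℝ X]
  [NormedAddCommGroup Y] [NormedSpace ℝ Y]

namespace ContinuousLinearMap

theorem exists_norm_one_norm_apply_eq_opNorm [FiniteDimensional ℝ X] [Nontrivial X]
    (T : X →L[ℝ] Y) : ∃ x : X, ‖x‖ = 1 ∧ ‖T x‖ = ‖T‖ := by
  obtain ⟨x, hx, hmax⟩ := (isCompact_sphere (0 : X) 1).exists_isMaxOn
    (NormedSpace.sphere_nonempty.mpr zero_le_one) T.continuous.norm.continuousOn
  rw [mem_sphere_zero_iff_norm] at hx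
  refine ⟨x, hx, le_antisymm (T.unit_le_opNorm x hx.le) ?_⟩
  exact T.opNorm_le_of_unit_norm (norm_nonneg _) fun y hy ↦ hmax (mem_sphere_zero_iff_norm.mpr hy)

theorem exists_norm_one_apply_eq_opNorm [FiniteDimensional ℝ X] [Nontrivial X]
    (f : X →L[ℝ] ℝ) : ∃ x : X, ‖x‖ = 1 ∧ f x = ‖f‖ := by
  obtain ⟨x, hx, hfx⟩ := f.exists_norm_one_norm_apply_eq_opNorm
  rcases abs_eq (norm_nonneg f) |>.mp hfx with h | h
  · exact ⟨x, hx, h⟩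
  · exact ⟨-x, by rwa [norm_neg], by rw [map_neg, h, neg_neg]⟩

theorem bjOrth_of_apply_eq_zero {T A : X →L[ℝ] Y} {x : X} (hx : ‖x‖ = 1) (hTx : ‖T x‖ = ‖T‖)
    (hAx : A x = 0) : BJOrth T A := fun l ↦
  calc ‖T‖ = ‖(T + l • A) x‖ := by simp [hAx, hTx]
    _ ≤ ‖T + l • A‖ := (T + l • A).unit_le_opNorm x hx.le

end ContinuousLinearMap

theorem exists_norm_one_dual_apply_eq_zero [FiniteDimensional ℝ X]
    (hdim : 2 ≤ Module.finrank ℝ X) (x : X) :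
    ∃ g : X →L[ℝ] ℝ, ‖g‖ = 1 ∧ g x = 0 ∧ ∃ z : X, ‖z‖ = 1 ∧ g z = 1 := by
  have hspan : Submodule.span ℝ {x} < ⊤ := by
    refine lt_top_iff_ne_top.mpr fun h ↦ ?_
    have := finrank_span_le_card (R := ℝ) ({x} : Set X)
    rw [h, finrank_top] at this
    simp at this
    omega
  obtain ⟨f, hf, hfx⟩ := Submodule.exists_dual_map_eq_bot_of_lt_top hspan inferInstance
  have : Nontrivial X := Module.nontrivial_of_finrank_pos (R := ℝ) (by omega)
  set g₀ := LinearMap.toContinuousLinearMap f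
  have hg₀ : ‖g₀‖ ≠ 0 := by simpa [g₀] using hf
  obtain ⟨z, hz, hg₀z⟩ := g₀.exists_norm_one_apply_eq_opNorm
  refine ⟨‖g₀‖⁻¹ • g₀, by rw [norm_smul, norm_inv, norm_norm, inv_mul_cancel₀ hg₀], ?_, z, hz, ?_⟩
  · have hfx' : f x = 0 := by
      have := Submodule.mem_map_of_mem (f := f) (Submodule.mem_span_singleton_self x)
      rwa [hfx, Submodule.mem_bot] at this
    simp [g₀, hfx']
  · rw [smul_apply, hg₀z, smul_eq_mul, inv_mul_cancel₀ hg₀]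

theorem StrictConvexSpace.eq_or_eq_neg_of_abs_apply_eq_one [StrictConvexSpace ℝ X]
    {g : X →L[ℝ] ℝ} (hg : ‖g‖ = 1) {z x : X} (hz : ‖z‖ = 1) (hgz : g z = 1) (hx : ‖x‖ = 1)
    (hgx : |g x| = 1) : x = z ∨ x = -z := by
  have key : ∀ y : X, ‖y‖ = 1 → g y = 1 → y = z := fun y hy hgy ↦ by
    refine eq_of_norm_eq_of_norm_add_eq (hy.trans hz.symm) (le_antisymm (norm_add_le _ _) ?_)
    calc ‖y‖ + ‖z‖ = g (y + z) := by rw [map_add, hy, hz, hgy, hgz]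
      _ ≤ ‖y + z‖ := by simpa [hg] using g.le_opNorm (y + z) |>.trans' (le_abs_self _)
  rcases abs_eq zero_le_one |>.mp hgx with h | h
  · exact .inl (key x hx h)
  · exact .inr (by rw [← key (-x) (by rwa [norm_neg]) (by rw [map_neg, h, neg_neg]), neg_neg])

theorem StrictConvexSpace.exists_abs_apply_le_of_isOpen [FiniteDimensional ℝ X]
    [StrictConvexSpace ℝ X] {g : X →L[ℝ] ℝ} (hg : ‖g‖ = 1) {z : X} (hz : ‖z‖ = 1)
    (hgz : g z = 1) {U : Set X} (hU : IsOpen U) (hzU : z ∈ U) :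
    ∃ c < 1, ∀ x : X, ‖x‖ = 1 → x ∉ U → -x ∉ U → |g x| ≤ c := by
  set K := Metric.sphere (0 : X) 1 \ (U ∪ -U)
  have hK_mem : ∀ x : X, ‖x‖ = 1 → x ∉ U → -x ∉ U → x ∈ K := fun x hx hxU hnxU ↦
    ⟨mem_sphere_zero_iff_norm.mpr hx, by rintro (h | h); exacts [hxU h, hnxU h]⟩
  rcases K.eq_empty_or_nonempty with hK | hK
  · exact ⟨0, zero_lt_one, fun x hx hxU hnxU ↦ by simpa [hK] using hK_mem x hx hxU hnxU⟩
  obtain ⟨p, ⟨hp, hpU⟩, hmax⟩ := ((isCompact_sphere 0 1).diff (hU.union hU.neg)).exists_isMaxOn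
    hK g.continuous.abs.continuousOn
  rw [mem_sphere_zero_iff_norm] at hp
  refine ⟨|g p|, ?_, fun x hx hxU hnxU ↦ hmax (hK_mem x hx hxU hnxU)⟩
  refine lt_of_le_of_ne (by simpa [hg] using g.unit_le_opNorm p hp.le) fun h ↦ hpU ?_
  rcases eq_or_eq_neg_of_abs_apply_eq_one hg hz hgz hp h with rfl | rfl
  exacts [.inl hzU, .inr (by simpa using hzU)]

theorem norm_smul_sub_smul_lt {t μ : ℝ} {v w : Y} (ht : t ≤ 1) (hμ : 0 < μ) (hμt : μ ≤ t)
    (hv : ‖v - w‖ < ‖w‖) : ‖t • w - μ • v‖ < ‖w‖ :=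
  calc ‖t • w - μ • v‖ = ‖(t - μ) • w - μ • (v - w)‖ := by congr 1; module
    _ ≤ (t - μ) * ‖w‖ + μ * ‖v - w‖ := by
      refine (norm_sub_le _ _).trans_eq ?_
      rw [norm_smul, norm_smul, Real.norm_of_nonneg (sub_nonneg.mpr hμt), Real.norm_of_nonneg hμ.le]
    _ < (t - μ) * ‖w‖ + μ * ‖w‖ := by gcongr
    _ ≤ ‖w‖ := by nlinarith [norm_nonneg w]

theorem StrictConvexSpace.exists_pos_forall_norm_smul_sub_smul_lt [FiniteDimensional ℝ X]
    [StrictConvexSpace ℝ X] {g : X →L[ℝ] ℝ} (hg : ‖g‖ = 1) {z : X} (hz : ‖z‖ = 1)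
    (hgz : g z = 1) {T : X →L[ℝ] Y} (hTz : T z ≠ 0) :
    ∃ μ : ℝ, 0 < μ ∧ ∀ x : X, ‖x‖ = 1 → ‖g x • T z - μ • T x‖ < ‖T z‖ := by
  set w := T z
  set U := {x : X | 1 / 2 < g x ∧ ‖T x - w‖ < ‖w‖}
  have hU : IsOpen U := (isOpen_lt continuous_const g.continuous).inter
    (isOpen_lt (T.continuous.sub continuous_const).norm continuous_const)
  have hzU : z ∈ U := ⟨by norm_num [hgz], by simpa [w] using hTz⟩
  obtain ⟨c, hc, hcU⟩ := exists_abs_apply_le_of_isOpen hg hz hgz hU hzU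
  obtain ⟨μ₀, hμ₀, hμ₀T⟩ := exists_pos_mul_lt (mul_pos (sub_pos.mpr hc) (norm_pos_iff.mpr hTz)) ‖T‖
  set μ := min μ₀ (1 / 2)
  have hμ : 0 < μ := lt_min hμ₀ one_half_pos
  refine ⟨μ, hμ, fun x hx ↦ ?_⟩
  have hgx : |g x| ≤ 1 := by simpa [hg] using g.unit_le_opNorm x hx.le
  have near : ∀ y : X, y ∈ U → |g y| ≤ 1 → ‖g y • w - μ • T y‖ < ‖w‖ :=
    fun y hyU hgy ↦ norm_smul_sub_smul_lt (abs_le.mp hgy).2 hμ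
      ((min_le_right _ _).trans hyU.1.le) hyU.2
  by_cases hxU : x ∈ U
  · exact near x hxU hgx
  by_cases hnxU : -x ∈ U
  · have := near (-x) hnxU (by rwa [map_neg, abs_neg])
    rwa [show g (-x) • w - μ • T (-x) = -(g x • w - μ • T x) by simp only [map_neg]; module,
      norm_neg] at this
  calc ‖g x • w - μ • T x‖ ≤ |g x| * ‖w‖ + μ * ‖T x‖ := by
        refine (norm_sub_le _ _).trans_eq ?_
        rw [norm_smul, norm_smul, Real.norm_eq_abs, Real.norm_of_nonneg hμ.le]
    _ ≤ c * ‖w‖ + μ₀ * ‖T‖ := by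
        gcongr
        exacts [hcU x hx hxU hnxU, min_le_left _ _, T.unit_le_opNorm x hx.le]
    _ < ‖w‖ := by linarith

theorem StrictConvexSpace.not_bjOrth_smulRight_apply [FiniteDimensional ℝ X]
    [StrictConvexSpace ℝ X] {g : X →L[ℝ] ℝ} (hg : ‖g‖ = 1) {z : X} (hz : ‖z‖ = 1)
    (hgz : g z = 1) {T : X →L[ℝ] Y} (hTz : T z ≠ 0) : ¬ BJOrth (g.smulRight (T z)) T := by
  intro h
  obtain ⟨μ, hμ, hlt⟩ := exists_pos_forall_norm_smul_sub_smul_lt hg hz hgz hTz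
  have : Nontrivial X := ⟨z, 0, by rintro rfl; simp at hz⟩
  obtain ⟨x, hx, hnorm⟩ := (g.smulRight (T z) + (-μ) • T).exists_norm_one_norm_apply_eq_opNorm
  have happ : (g.smulRight (T z) + (-μ) • T) x = g x • T z - μ • T x := by
    simp [sub_eq_add_neg]
  have := h (-μ)
  rw [ContinuousLinearMap.norm_smulRight_apply, hg, one_mul, ← hnorm, happ] at this
  exact (hlt x hx).not_ge this

end

theorem invertible_not_leftSym_general {X : Type*} [NormedAddCommGroup X]
    [NormedSpace ℝ X] [FiniteDimensional ℝ X] [StrictConvexSpace ℝ X]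
    (hdim : 2 ≤ Module.finrank ℝ X)
    (T : X →L[ℝ] X) (hT : Function.Bijective T) :
    ¬ LeftSymPoint T := by
  intro hT_sym
  have : Nontrivial X := Module.nontrivial_of_finrank_pos (R := ℝ) (by omega)
  obtain ⟨x, hx, hTx⟩ := T.exists_norm_one_norm_apply_eq_opNorm
  obtain ⟨g, hg, hgx, z, hz, hgz⟩ := exists_norm_one_dual_apply_eq_zero hdim x
  have hTz : T z ≠ 0 := (map_ne_zero_iff T hT.injective).mpr (by rintro rfl; simp at hz)
  have hT_A : BJOrth T (g.smulRight (T z)) :=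
    ContinuousLinearMap.bjOrth_of_apply_eq_zero hx hTx (by simp [hgx])
  exact StrictConvexSpace.not_bjOrth_smulRight_apply hg hz hgz hTz (hT_sym _ hT_A)

theorem invertible_not_leftSym {X : Type*} [NormedAddCommGroup X]
    [NormedSpace ℝ X] [FiniteDimensional ℝ X] [StrictConvexSpace ℝ X]
    (hsm : SmoothSpace X) (hdim : 2 ≤ Module.finrank ℝ X)
    (T : X →L[ℝ] X) (hT : Function.Bijective T) :
    ¬ LeftSymPoint T :=
  invertible_not_leftSym_general hdim T hT
end

section
/- Let X = l_1², i.e., ℝ² with the norm ‖(a,b)‖ = |a| + |b|, and let T be the linear operator on X defined by T(1,0) = (1/2, 1/2) and T(0,1) = (0,0). Then T is a nonzero left symmetric point of the space of continuous linear operators on X with the operator norm: for every continuous linear operator A on X, T ⊥_B A implies A ⊥_B T. -/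
/-- `ℝ²` with the `ℓ₁` norm. -/
abbrev L1Two : Type := PiLp 1 (fun _ : Fin 2 => ℝ)

/-- Inclusion of a pair of reals into `ℓ₁²`. -/
def v1 (a b : ℝ) : L1Two := (WithLp.equiv 1 (Fin 2 → ℝ)).symm ![a, b]

/-!
The operator norm on `ℓ₁²` is the larger of the `ℓ₁` norms of the two columns, and `T` has
columns `(1/2, 1/2)` and `0`. Let `A` have first column `(a, b)`. For small `λ` both entries of the
first column of `T + λ A` stay positive, so its norm is `1 + λ (a + b)`, while the second column
has norm `O(λ)`; hence `T ⊥_B A` forces `a + b = 0`. Then the first column `(a + μ/2, -a + μ/2)`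
of `A + μ T` still has `ℓ₁` norm at least `|2a| = |a| + |b|`, and the second column equals that
of `A`, so `‖A + μ T‖ ≥ ‖A‖`.
-/

section OpNormL1

variable {𝕜 ι F : Type*} [NontriviallyNormedField 𝕜] [Fintype ι] [DecidableEq ι]
  [SeminormedAddCommGroup F] [NormedSpace 𝕜 F]

theorem PiLp.norm_apply_single_one_le_opNorm {p : ENNReal} [Fact (1 ≤ p)]
    (S : PiLp p (fun _ : ι => 𝕜) →L[𝕜] F) (i : ι) :
    ‖S (PiLp.single p i 1)‖ ≤ ‖S‖ := by
  simpa [PiLp.norm_single] using S.le_opNorm (PiLp.single p i 1)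

theorem PiLp.opNorm_le_of_norm_apply_single_one_le (S : PiLp 1 (fun _ : ι => 𝕜) →L[𝕜] F)
    {C : ℝ} (hC : 0 ≤ C) (h : ∀ i, ‖S (PiLp.single 1 i 1)‖ ≤ C) : ‖S‖ ≤ C := by
  refine S.opNorm_le_bound hC fun x => ?_
  have hx : x = ∑ i, x i • PiLp.single 1 i (1 : 𝕜) := by
    simpa using ((PiLp.basisFun 1 𝕜 ι).sum_repr x).symm
  calc ‖S x‖ = ‖∑ i, x i • S (PiLp.single 1 i 1)‖ := by
        conv_lhs => rw [hx, map_sum]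
        simp only [map_smul]
    _ ≤ ∑ i, ‖x i‖ * ‖S (PiLp.single 1 i 1)‖ := by
        refine (norm_sum_le _ _).trans_eq ?_
        simp only [norm_smul]
    _ ≤ ∑ i, ‖x i‖ * C := by gcongr with i; exact h i
    _ = C * ‖x‖ := by rw [PiLp.norm_eq_of_L1, ← Finset.sum_mul, mul_comm]

end OpNormL1

theorem norm_v1 (a b : ℝ) : ‖v1 a b‖ = |a| + |b| := by
  simp [PiLp.norm_eq_of_L1, v1]

theorem eq_v1 (x : L1Two) : x = v1 (x 0) (x 1) := by
  ext i; fin_cases i <;> simp [v1]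

theorem v1_add (a b c d : ℝ) : v1 a b + v1 c d = v1 (a + c) (b + d) := by
  ext i; fin_cases i <;> simp [v1]

theorem v1_smul (l a b : ℝ) : l • v1 a b = v1 (l * a) (l * b) := by
  ext i; fin_cases i <;> simp [v1]

theorem v1_one_zero : v1 1 0 = PiLp.single 1 0 1 := by
  ext i; fin_cases i <;> simp [v1]

theorem v1_zero_one : v1 0 1 = PiLp.single 1 1 1 := by
  ext i; fin_cases i <;> simp [v1]

theorem L1Two.opNorm_eq_max {F : Type*} [SeminormedAddCommGroup F] [NormedSpace ℝ F]
    (S : L1Two →L[ℝ] F) : ‖S‖ = max ‖S (v1 1 0)‖ ‖S (v1 0 1)‖ := by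
  refine le_antisymm (PiLp.opNorm_le_of_norm_apply_single_one_le S (by positivity) ?_)
    (max_le ?_ ?_)
  · intro i
    fin_cases i
    · exact (v1_one_zero ▸ le_max_left _ _)
    · exact (v1_zero_one ▸ le_max_right _ _)
  · exact v1_one_zero ▸ PiLp.norm_apply_single_one_le_opNorm S 0
  · exact v1_zero_one ▸ PiLp.norm_apply_single_one_le_opNorm S 1

section Columns

variable {T A : L1Two →L[ℝ] L1Two} {a b c d : ℝ}

theorem opNorm_eq_one_of_columns (hT1 : T (v1 1 0) = v1 (1/2) (1/2)) (hT2 : T (v1 0 1) = 0) :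
    ‖T‖ = 1 := by
  rw [L1Two.opNorm_eq_max, hT1, hT2, norm_v1, norm_zero]
  norm_num

theorem add_eq_zero_of_bjOrth (hT1 : T (v1 1 0) = v1 (1/2) (1/2)) (hT2 : T (v1 0 1) = 0)
    (hA1 : A (v1 1 0) = v1 a b) (hA2 : A (v1 0 1) = v1 c d) (h : BJOrth T A) : a + b = 0 := by
  by_contra hs
  set M := |a| + |b| + |c| + |d|
  -- `|l| * M < 1/2` keeps the first column of `T + l • A` in the positive quadrant.
  set l := -(a + b) / (2 * (|a + b| * M + 1))
  have hden : 0 < 2 * (|a + b| * M + 1) := by positivity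
  have hlM : |l| * M < 1 / 2 := by
    rw [abs_div, abs_neg, abs_of_pos hden, div_mul_eq_mul_div, div_lt_iff₀ hden]
    linarith [mul_nonneg (abs_nonneg (a + b)) (by positivity : (0 : ℝ) ≤ M)]
  have hls : l * (a + b) < 0 := by
    rw [div_mul_eq_mul_div, div_neg_iff]
    exact Or.inr ⟨by nlinarith [sq_pos_of_ne_zero hs], hden⟩
  have hsmall : |l * a| + |l * b| + (|l * c| + |l * d|) < 1 / 2 := by
    simpa only [M, abs_mul, mul_add, add_assoc] using hlM
  have ha := abs_nonneg (l * a)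
  have hb := abs_nonneg (l * b)
  have hc := abs_nonneg (l * c)
  have hd := abs_nonneg (l * d)
  have hpos : ∀ x, |l * x| < 1 / 2 → 0 < 1 / 2 + l * x := fun x hx => by
    linarith [neg_abs_le (l * x)]
  have hlt : ‖T + l • A‖ < 1 := by
    rw [L1Two.opNorm_eq_max]
    simp only [add_apply, smul_apply, hT1, hT2, hA1, hA2, v1_smul, v1_add, zero_add, norm_v1]
    refine max_lt ?_ (by linarith)
    rw [abs_of_pos (hpos a (by linarith)), abs_of_pos (hpos b (by linarith))]
    linarith
  linarith [h l, opNorm_eq_one_of_columns hT1 hT2]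

theorem bjOrth_of_add_eq_zero (hT1 : T (v1 1 0) = v1 (1/2) (1/2)) (hT2 : T (v1 0 1) = 0)
    (hA1 : A (v1 1 0) = v1 a b) (hA2 : A (v1 0 1) = v1 c d) (hab : a + b = 0) : BJOrth A T := by
  intro μ
  rw [L1Two.opNorm_eq_max, L1Two.opNorm_eq_max]
  simp only [add_apply, smul_apply, hT1, hT2, hA1, hA2,
    v1_smul, v1_add, smul_zero, add_zero, norm_v1]
  refine max_le_max_right _ ?_
  calc |a| + |b| = |(a + μ * (1/2)) - (b + μ * (1/2))| := by
        rw [eq_neg_of_add_eq_zero_right hab, abs_neg]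
        ring_nf
        rw [abs_mul, abs_two]
    _ ≤ |a + μ * (1/2)| + |b + μ * (1/2)| := abs_sub _ _

end Columns

theorem l1_nonzero_leftSym_operator (T : L1Two →L[ℝ] L1Two)
    (hT1 : T (v1 1 0) = v1 (1/2) (1/2)) (hT2 : T (v1 0 1) = 0) :
    T ≠ 0 ∧ ∀ A : L1Two →L[ℝ] L1Two, BJOrth T A → BJOrth A T := by
  refine ⟨fun h => by simpa [h] using opNorm_eq_one_of_columns hT1 hT2, fun A hTA => ?_⟩
  have hA1 := eq_v1 (A (v1 1 0))
  have hA2 := eq_v1 (A (v1 0 1))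
  exact bjOrth_of_add_eq_zero hT1 hT2 hA1 hA2 (add_eq_zero_of_bjOrth hT1 hT2 hA1 hA2 hTA)
end

section
/- Let X = l_p² with 2 ≤ p < ∞, let T be the linear operator on X defined by T(1,0) = (1,0), T(0,1) = (0,0), and let A be the linear operator on X defined by A(1,0) = (0,1), A(0,1) = (1,1). Then T ⊥_B A but A is not Birkhoff-James orthogonal to T (in the operator norm); in particular T is not a left symmetric point of the space of operators on X. -/
open scoped ENNReal

/-- Inclusion of a pair of reals into `ℓ_p²`. -/
def vp (p : ℝ≥0∞) (a b : ℝ) : PiLp p (fun _ : Fin 2 => ℝ) :=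
  (WithLp.equiv p (Fin 2 → ℝ)).symm ![a, b]


set_option maxHeartbeats 1000000 in
private lemma bj_main_ineq (p : ℝ) (hp : 2 ≤ p) (Mp : ℝ)
    (hMp : 3/4 + (1.36:ℝ) ^ p ≤ Mp)
    (hMp2 : ∀ s t : ℝ, 0 ≤ s → 0 ≤ t → s ^ p + t ^ p ≤ 1 → t ^ p + (s + t) ^ p ≤ Mp)
    (s t : ℝ) (hs : 0 ≤ s) (ht : 0 ≤ t) (h1 : s ^ p + t ^ p ≤ 1) :
    (t + (100 * p)⁻¹ * s) ^ p + |t - s| ^ p ≤ Mp - ((1:ℝ)/8) ^ (p - 1) / 1000 ∧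
    |t - (100 * p)⁻¹ * s| ^ p + (s + t) ^ p ≤ Mp - ((1:ℝ)/8) ^ (p - 1) / 1000 := by
  have hp0 : (0:ℝ) < p := by linarith
  have hp1 : (1:ℝ) ≤ p := by linarith
  set ε : ℝ := (100 * p)⁻¹ with hε_def
  have hε0 : 0 < ε := by positivity
  have hεp : ε * p = 1 / 100 := by
    rw [hε_def]; field_simp
  have hε200 : ε ≤ 1 / 200 := by
    have h2 : (0:ℝ) < 200 := by norm_num
    have : (200:ℝ) ≤ 100 * p := by linarith
    calc ε ≤ (200:ℝ)⁻¹ := by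
          apply inv_anti₀ h2 this
      _ = 1/200 := by norm_num
  set δ : ℝ := ((1:ℝ)/8) ^ (p-1) / 1000 with hδ_def
  have hδ0 : 0 < δ := by
    have : (0:ℝ) < ((1:ℝ)/8) ^ (p-1) := Real.rpow_pos_of_pos (by norm_num) _
    positivity
  have hδ8 : δ ≤ 1/8000 := by
    have h8 : ((1:ℝ)/8) ^ (p-1) ≤ ((1:ℝ)/8) ^ (1:ℝ) :=
      Real.rpow_le_rpow_of_exponent_ge (by norm_num) (by norm_num) (by linarith)
    rw [Real.rpow_one] at h8
    rw [hδ_def]; linarith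
  have hsnn : (0:ℝ) ≤ s ^ p := Real.rpow_nonneg hs p
  have htnn : (0:ℝ) ≤ t ^ p := Real.rpow_nonneg ht p
  have hs1 : s ≤ 1 := by
    by_contra h; push_neg at h
    have : (1:ℝ) < s ^ p := by
      calc (1:ℝ) = 1 ^ p := (Real.one_rpow p).symm
        _ < s ^ p := Real.rpow_lt_rpow (by norm_num) h hp0
    linarith
  have ht1 : t ≤ 1 := by
    by_contra h; push_neg at h
    have : (1:ℝ) < t ^ p := by
      calc (1:ℝ) = 1 ^ p := (Real.one_rpow p).symm
        _ < t ^ p := Real.rpow_lt_rpow (by norm_num) h hp0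
    linarith
  have hεs0 : 0 ≤ ε * s := by positivity
  have hεs : ε * s ≤ 1/200 := by
    have h := mul_le_mul_of_nonneg_left hs1 hε0.le
    rw [mul_one] at h
    linarith
  have hA36 : (1.36:ℝ)^(2:ℝ) ≤ (1.36:ℝ)^p := Real.rpow_le_rpow_of_exponent_le (by norm_num) hp
  have hA36' : (1.36:ℝ)^(2:ℝ) = 1.8496 := by
    rw [show (2:ℝ) = ((2:ℕ):ℝ) by norm_num, Real.rpow_natCast]; norm_num
  constructor
  · -- case A
    have h2 : (t + ε*s) ^ p ≤ (1+ε)^p := by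
      apply Real.rpow_le_rpow (by positivity) _ hp0.le
      have : ε * s ≤ ε := by nlinarith
      linarith
    have h3 : (1+ε)^p ≤ 100/99 := by
      have hb : 1 + p * (-ε) ≤ (1 + -ε)^p :=
        one_add_mul_self_le_rpow_one_add (by linarith) hp1
      have h99 : (99/100 : ℝ) ≤ (1-ε)^p := by
        have e1 : 1 + p * (-ε) = 1 - ε * p := by ring
        have e2 : (1:ℝ) + -ε = 1 - ε := by ring
        rw [e1, e2, hεp] at hb
        linarith
      have hprod : (1-ε)^p * (1+ε)^p ≤ 1 := by
        rw [← Real.mul_rpow (by linarith) (by positivity)]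
        apply Real.rpow_le_one (by nlinarith) (by nlinarith) hp0.le
      have h1pε : 0 ≤ (1+ε)^p := Real.rpow_nonneg (by positivity) _
      nlinarith
    have h4 : |t - s| ^ p ≤ 1 :=
      Real.rpow_le_one (abs_nonneg _) (abs_le.mpr ⟨by linarith, by linarith⟩) hp0.le
    linarith
  · rcases le_or_gt (s + t) (6/5 : ℝ) with hst | hst
    · have h5 : |t - ε*s| ^ p ≤ 1 :=
        Real.rpow_le_one (abs_nonneg _) (abs_le.mpr ⟨by linarith, by linarith⟩) hp0.le
      have h6 : (s+t)^p ≤ (6/5:ℝ)^p := Real.rpow_le_rpow (by positivity) hst hp0.le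
      have h7 : (1.36:ℝ)^p = (6/5:ℝ)^p * (17/15:ℝ)^p := by
        rw [← Real.mul_rpow (by norm_num) (by norm_num)]; norm_num
      have h8 : ((17:ℝ)/15)^(2:ℝ) ≤ ((17:ℝ)/15)^p := Real.rpow_le_rpow_of_exponent_le (by norm_num) hp
      have h9 : ((6:ℝ)/5)^(2:ℝ) ≤ ((6:ℝ)/5)^p := Real.rpow_le_rpow_of_exponent_le (by norm_num) hp
      have e8 : ((17:ℝ)/15)^(2:ℝ) = 289/225 := by
        rw [show (2:ℝ) = ((2:ℕ):ℝ) by norm_num, Real.rpow_natCast]; norm_num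
      have e9 : ((6:ℝ)/5)^(2:ℝ) = 36/25 := by
        rw [show (2:ℝ) = ((2:ℕ):ℝ) by norm_num, Real.rpow_natCast]; norm_num
      have hX0 : (36/25:ℝ) ≤ (6/5:ℝ)^p := by linarith
      have hY1 : (64/225:ℝ) ≤ (17/15:ℝ)^p - 1 := by linarith
      have hkey : (36/25:ℝ) * (64/225) ≤ (6/5:ℝ)^p * ((17/15:ℝ)^p - 1) :=
        mul_le_mul hX0 hY1 (by norm_num) (by linarith)
      linarith
    · have hs5 : 1/5 ≤ s := by linarith
      have ht5 : 1/5 ≤ t := by linarith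
      set t' : ℝ := t - ε*s with ht'_def
      have ht'8 : 1/8 ≤ t' := by rw [ht'_def]; linarith
      have ht'0 : 0 < t' := by linarith
      have habs : |t - ε*s| = t' := abs_of_nonneg (by linarith)
      have hu0 : (0:ℝ) ≤ ε*s/t' := by positivity
      have hber : 1 + p * (ε*s/t') ≤ (1 + ε*s/t') ^ p :=
        one_add_mul_self_le_rpow_one_add (by linarith) hp1
      have hmul : (1 + ε*s/t')^p * t'^p = t^p := by
        rw [← Real.mul_rpow (by positivity) ht'0.le]
        congr 1
        field_simp
        ring
      have htp1 : t'^(p-1) * t' = t'^p := by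
        rw [← Real.rpow_add_one ht'0.ne']
        ring_nf
      have hgap : t'^p + p*(ε*s)*t'^(p-1) ≤ t^p := by
        have h := mul_le_mul_of_nonneg_right hber (Real.rpow_nonneg ht'0.le p)
        rw [hmul] at h
        calc t'^p + p*(ε*s)*t'^(p-1) = (1 + p * (ε*s/t')) * t'^p := by
              rw [← htp1]; field_simp
          _ ≤ t^p := h
      have ht'low : ((1:ℝ)/8)^(p-1) ≤ t'^(p-1) :=
        Real.rpow_le_rpow (by norm_num) ht'8 (by linarith)
      have hM2 := hMp2 s t hs ht h1
      rw [habs]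
      have hps : (1/500 : ℝ) ≤ p * (ε*s) := by nlinarith
      have hprod : (1/500:ℝ) * ((1:ℝ)/8)^(p-1) ≤ (p*(ε*s)) * t'^(p-1) :=
        mul_le_mul hps ht'low (by positivity) (by positivity)
      have h80 : (0:ℝ) ≤ ((1:ℝ)/8)^(p-1) := by positivity
      rw [hδ_def]
      linarith

set_option maxHeartbeats 1000000 in
theorem lp_explicit_not_leftSym (p : ℝ) (hp : 2 ≤ p) [Fact (1 ≤ ENNReal.ofReal p)]
    (T A : PiLp (ENNReal.ofReal p) (fun _ : Fin 2 => ℝ) →L[ℝ]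
           PiLp (ENNReal.ofReal p) (fun _ : Fin 2 => ℝ))
    (hT1 : T (vp (ENNReal.ofReal p) 1 0) = vp (ENNReal.ofReal p) 1 0)
    (hT2 : T (vp (ENNReal.ofReal p) 0 1) = 0)
    (hA1 : A (vp (ENNReal.ofReal p) 1 0) = vp (ENNReal.ofReal p) 0 1)
    (hA2 : A (vp (ENNReal.ofReal p) 0 1) = vp (ENNReal.ofReal p) 1 1) :
    BJOrth T A ∧ ¬ BJOrth A T ∧ ¬ LeftSymPoint T := by
  have hp0 : (0:ℝ) < p := by linarith
  have hp1 : (1:ℝ) ≤ p := by linarith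
  have hqt : (ENNReal.ofReal p).toReal = p := ENNReal.toReal_ofReal hp0.le
  have hnorm : ∀ a b : ℝ, ‖vp (ENNReal.ofReal p) a b‖ = (|a| ^ p + |b| ^ p) ^ (1/p) := by
    intro a b
    rw [PiLp.norm_eq_sum (by rw [hqt]; exact hp0)]
    simp [vp, Fin.sum_univ_two, Real.norm_eq_abs, hqt]
  have habs_nonneg : ∀ a b : ℝ, (0:ℝ) ≤ |a| ^ p + |b| ^ p := fun a b => by positivity
  have hnormp : ∀ a b : ℝ, ‖vp (ENNReal.ofReal p) a b‖ ^ p = |a| ^ p + |b| ^ p := by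
    intro a b
    rw [hnorm, one_div, Real.rpow_inv_rpow (habs_nonneg a b) hp0.ne']
  have hv_eq : ∀ v : PiLp (ENNReal.ofReal p) (fun _ : Fin 2 => ℝ), vp (ENNReal.ofReal p) (v 0) (v 1) = v := by
    intro v; ext i; fin_cases i <;> simp [vp]
  have hnorm_le_one : ∀ a b : ℝ, |a| ^ p + |b| ^ p ≤ 1 → ‖vp (ENNReal.ofReal p) a b‖ ≤ 1 := by
    intro a b h
    rw [hnorm]
    exact Real.rpow_le_one (habs_nonneg a b) h (by positivity)
  have hdecomp : ∀ v : PiLp (ENNReal.ofReal p) (fun _ : Fin 2 => ℝ),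
      vp (ENNReal.ofReal p) (v 0) (v 1) = v 0 • vp (ENNReal.ofReal p) 1 0 + v 1 • vp (ENNReal.ofReal p) 0 1 := by
    intro v; ext i; fin_cases i <;> simp [vp]
  have hTv : ∀ v : PiLp (ENNReal.ofReal p) (fun _ : Fin 2 => ℝ), T v = vp (ENNReal.ofReal p) (v 0) 0 := by
    intro v
    conv_lhs => rw [← hv_eq v]
    rw [hdecomp v, map_add, map_smul, map_smul, hT1, hT2, smul_zero, add_zero]
    ext i; fin_cases i <;> simp [vp]
  have hAv : ∀ v : PiLp (ENNReal.ofReal p) (fun _ : Fin 2 => ℝ), A v = vp (ENNReal.ofReal p) (v 1) (v 0 + v 1) := by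
    intro v
    conv_lhs => rw [← hv_eq v]
    rw [hdecomp v, map_add, map_smul, map_smul, hA1, hA2]
    ext i; fin_cases i <;> simp [vp]
  have he1 : ‖vp (ENNReal.ofReal p) 1 0‖ = 1 := by
    rw [hnorm]
    norm_num [abs_one, abs_zero, Real.one_rpow, Real.zero_rpow hp0.ne']
  have hT_norm_le : ‖T‖ ≤ 1 := by
    apply ContinuousLinearMap.opNorm_le_bound _ zero_le_one
    intro v
    rw [hTv v, one_mul]
    have h1 : ‖vp (ENNReal.ofReal p) (v 0) 0‖ ^ p ≤ ‖v‖ ^ p := by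
      rw [hnormp]
      conv_rhs => rw [← hv_eq v]
      rw [hnormp]
      have : (0:ℝ) ≤ |v 1| ^ p := by positivity
      simp only [abs_zero, Real.zero_rpow hp0.ne', add_zero]
      linarith
    by_contra hcon
    push_neg at hcon
    have := Real.rpow_lt_rpow (norm_nonneg v) hcon hp0
    linarith
  have hTA : BJOrth T A := by
    intro l
    have he1l : (T + l • A) (vp (ENNReal.ofReal p) 1 0) = vp (ENNReal.ofReal p) 1 l := by
      simp only [ContinuousLinearMap.add_apply, ContinuousLinearMap.coe_smul',
        Pi.smul_apply, hT1, hA1]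
      ext i; fin_cases i <;> simp [vp]
    have h1 : (1:ℝ) ≤ ‖vp (ENNReal.ofReal p) 1 l‖ := by
      rw [hnorm]
      have h2 : (0:ℝ) ≤ |l|^p := by positivity
      have h3 : (1:ℝ) ≤ |1| ^ p + |l| ^ p := by
        rw [abs_one, Real.one_rpow]; linarith
      calc (1:ℝ) = 1 ^ (1/p) := (Real.one_rpow _).symm
        _ ≤ (|1|^p + |l|^p) ^ (1/p) := Real.rpow_le_rpow zero_le_one h3 (by positivity)
    calc ‖T‖ ≤ 1 := hT_norm_le
      _ ≤ ‖vp (ENNReal.ofReal p) 1 l‖ := h1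
      _ = ‖(T + l • A) (vp (ENNReal.ofReal p) 1 0)‖ := by rw [he1l]
      _ ≤ ‖T + l • A‖ * ‖vp (ENNReal.ofReal p) 1 0‖ := ContinuousLinearMap.le_opNorm _ _
      _ = ‖T + l • A‖ := by rw [he1, mul_one]
  -- Part 2
  have hMp2 : ∀ s t : ℝ, 0 ≤ s → 0 ≤ t → s ^ p + t ^ p ≤ 1 →
      t ^ p + (s + t) ^ p ≤ ‖A‖ ^ p := by
    intro s t hs ht h1
    have hv : ‖vp (ENNReal.ofReal p) s t‖ ≤ 1 := hnorm_le_one s t (by rwa [abs_of_nonneg hs, abs_of_nonneg ht])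
    have hs0 : (vp (ENNReal.ofReal p) s t) 0 = s := by simp [vp]
    have ht0 : (vp (ENNReal.ofReal p) s t) 1 = t := by simp [vp]
    have hAu : A (vp (ENNReal.ofReal p) s t) = vp (ENNReal.ofReal p) t (s + t) := by rw [hAv, hs0, ht0]
    have h2 : ‖A (vp (ENNReal.ofReal p) s t)‖ ≤ ‖A‖ := by
      calc ‖A (vp (ENNReal.ofReal p) s t)‖ ≤ ‖A‖ * ‖vp (ENNReal.ofReal p) s t‖ := A.le_opNorm _
        _ ≤ ‖A‖ * 1 := mul_le_mul_of_nonneg_left hv (norm_nonneg A)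
        _ = ‖A‖ := mul_one _
    have h3 := Real.rpow_le_rpow (norm_nonneg _) h2 hp0.le
    rwa [hAu, hnormp, abs_of_nonneg ht, abs_of_nonneg (by linarith : (0:ℝ) ≤ s + t)] at h3
  set c : ℝ := (3/4:ℝ) ^ (1/p : ℝ) with hc_def
  have hc0 : 0 ≤ c := by rw [hc_def]; positivity
  have hcp : c ^ p = 3/4 := by rw [hc_def, one_div, Real.rpow_inv_rpow (by norm_num) hp0.ne']
  have hc86 : 43/50 ≤ c := by
    have hhalf : (1:ℝ)/p ≤ 1/2 := by rw [div_le_div_iff₀ hp0 (by norm_num)]; linarith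
    have h1 : (3/4:ℝ)^((1:ℝ)/2) ≤ (3/4:ℝ)^((1:ℝ)/p) :=
      Real.rpow_le_rpow_of_exponent_ge (by norm_num) (by norm_num) hhalf
    have e : ((3/4:ℝ)^((1:ℝ)/2))^(2:ℕ) = 3/4 := by
      rw [← Real.rpow_natCast ((3/4:ℝ)^((1:ℝ)/2)) 2, ← Real.rpow_mul (by norm_num)]
      norm_num
    have hpos : (0:ℝ) ≤ (3/4:ℝ)^((1:ℝ)/2) := by positivity
    nlinarith
  have hu_norm : ‖vp (ENNReal.ofReal p) (1/2) c‖ ≤ 1 := by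
    apply hnorm_le_one
    rw [abs_of_nonneg (by norm_num), abs_of_nonneg hc0, hcp]
    have h1 : ((1:ℝ)/2)^p ≤ ((1:ℝ)/2)^(2:ℝ) :=
      Real.rpow_le_rpow_of_exponent_ge (by norm_num) (by norm_num) hp
    have e : ((1:ℝ)/2)^(2:ℝ) = 1/4 := by
      rw [show (2:ℝ) = ((2:ℕ):ℝ) by norm_num, Real.rpow_natCast]; norm_num
    linarith
  have hMp_lb : 3/4 + (1.36:ℝ) ^ p ≤ ‖A‖ ^ p := by
    have hs0 : (vp (ENNReal.ofReal p) (1/2) c) 0 = 1/2 := by simp [vp]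
    have ht0 : (vp (ENNReal.ofReal p) (1/2) c) 1 = c := by simp [vp]
    have hAu : A (vp (ENNReal.ofReal p) (1/2) c) = vp (ENNReal.ofReal p) c (1/2 + c) := by rw [hAv, hs0, ht0]
    have h2 : ‖A (vp (ENNReal.ofReal p) (1/2) c)‖ ≤ ‖A‖ := by
      calc ‖A (vp (ENNReal.ofReal p) (1/2) c)‖ ≤ ‖A‖ * ‖vp (ENNReal.ofReal p) (1/2) c‖ := A.le_opNorm _
        _ ≤ ‖A‖ * 1 := mul_le_mul_of_nonneg_left hu_norm (norm_nonneg A)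
        _ = ‖A‖ := mul_one _
    have h3 := Real.rpow_le_rpow (norm_nonneg _) h2 hp0.le
    rw [hAu, hnormp, abs_of_nonneg hc0, abs_of_nonneg (by linarith : (0:ℝ) ≤ 1/2 + c),
      hcp] at h3
    have h4 : (1.36:ℝ)^p ≤ (1/2 + c)^p :=
      Real.rpow_le_rpow (by norm_num) (by linarith) hp0.le
    linarith
  have hM0 : 0 < ‖A‖ := by
    rcases (norm_nonneg A).lt_or_eq with h | h
    · exact h
    · exfalso
      rw [← h, Real.zero_rpow hp0.ne'] at hMp_lb
      have : 0 < (1.36:ℝ)^p := Real.rpow_pos_of_pos (by norm_num) p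
      linarith
  have hδ0 : 0 < ((1:ℝ)/8) ^ (p - 1) / 1000 := by
    have : (0:ℝ) < ((1:ℝ)/8) ^ (p-1) := Real.rpow_pos_of_pos (by norm_num) _
    positivity
  have hδ8 : ((1:ℝ)/8) ^ (p - 1) / 1000 ≤ 1/8000 := by
    have h8 : ((1:ℝ)/8) ^ (p-1) ≤ ((1:ℝ)/8) ^ (1:ℝ) :=
      Real.rpow_le_rpow_of_exponent_ge (by norm_num) (by norm_num) (by linarith)
    rw [Real.rpow_one] at h8
    linarith
  set S := A + (-(100*p)⁻¹ : ℝ) • T with hS_def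
  have hSv : ∀ v : PiLp (ENNReal.ofReal p) (fun _ : Fin 2 => ℝ),
      S v = vp (ENNReal.ofReal p) (v 1 - (100*p)⁻¹ * v 0) (v 0 + v 1) := by
    intro v
    rw [hS_def]
    simp only [ContinuousLinearMap.add_apply, ContinuousLinearMap.coe_smul', Pi.smul_apply]
    rw [hAv, hTv]
    ext i; fin_cases i <;> simp [vp] <;> ring
  have key : ∀ v : PiLp (ENNReal.ofReal p) (fun _ : Fin 2 => ℝ), ‖v‖ ≤ 1 →
      ‖S v‖ ^ p ≤ ‖A‖ ^ p - ((1:ℝ)/8) ^ (p - 1) / 1000 := by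
    intro v hv
    have hab : |v 0| ^ p + |v 1| ^ p ≤ 1 := by
      have h1 := Real.rpow_le_rpow (norm_nonneg v) hv hp0.le
      rw [Real.one_rpow] at h1
      calc |v 0|^p + |v 1|^p = ‖v‖^p := by
            conv_rhs => rw [← hv_eq v]
            rw [hnormp]
        _ ≤ 1 := h1
    rw [hSv v, hnormp]
    set a := v 0 with ha_def
    set b := v 1 with hb_def
    have main := bj_main_ineq p hp (‖A‖^p) hMp_lb hMp2
    have hε0 : (0:ℝ) < (100*p)⁻¹ := by positivity
    rcases le_or_gt 0 a with ha | ha <;> rcases le_or_gt 0 b with hb | hb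
    · have h := (main a b ha hb (by rwa [abs_of_nonneg ha, abs_of_nonneg hb] at hab)).2
      rwa [abs_of_nonneg (by linarith : (0:ℝ) ≤ a + b)]
    · have h := (main a (-b) ha (by linarith)
        (by rwa [abs_of_nonneg ha, abs_of_neg hb] at hab)).1
      have hεa : 0 ≤ (100*p)⁻¹ * a := by positivity
      have e1 : |b - (100*p)⁻¹ * a| = -b + (100*p)⁻¹ * a := by
        rw [abs_of_nonpos (by linarith)]; ring
      have e2 : |a + b| = |-b - a| := by rw [← abs_neg]; congr 1; ring
      rwa [e1, e2]
    · have h := (main (-a) b (by linarith) hb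
        (by rwa [abs_of_neg ha, abs_of_nonneg hb] at hab)).1
      have hεa : (100*p)⁻¹ * a ≤ 0 := mul_nonpos_of_nonneg_of_nonpos hε0.le ha.le
      have e1 : b + (100*p)⁻¹ * -a = b - (100*p)⁻¹ * a := by ring
      have e2 : |b - -a| = |a + b| := by congr 1; ring
      rw [e1, e2] at h
      rwa [abs_of_nonneg (by linarith : (0:ℝ) ≤ b - (100*p)⁻¹ * a)]
    · have h := (main (-a) (-b) (by linarith) (by linarith)
        (by rwa [abs_of_neg ha, abs_of_neg hb] at hab)).2
      have e1 : |-b - (100*p)⁻¹ * -a| = |b - (100*p)⁻¹ * a| := by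
        rw [← abs_neg]; congr 1; ring
      have e2 : (-a + -b) = -(a+b) := by ring
      rw [e1, e2] at h
      rw [show |a + b| = -(a+b) from abs_of_nonpos (by linarith)]
      exact h
  have hMδ0 : (0:ℝ) ≤ ‖A‖ ^ p - ((1:ℝ)/8) ^ (p - 1) / 1000 := by
    have : 0 < (1.36:ℝ)^p := Real.rpow_pos_of_pos (by norm_num) p
    linarith
  have hS_le : ‖S‖ ≤ (‖A‖ ^ p - ((1:ℝ)/8) ^ (p - 1) / 1000) ^ (1/p : ℝ) := by
    apply ContinuousLinearMap.opNorm_le_bound _ (by positivity)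
    intro x
    rcases eq_or_ne x 0 with rfl | hx
    · simp
    · have hx0 : 0 < ‖x‖ := norm_pos_iff.mpr hx
      set x' := (‖x‖⁻¹ : ℝ) • x with hx'_def
      have hx'1 : ‖x'‖ = 1 := by
        rw [hx'_def, norm_smul, norm_inv, norm_norm, inv_mul_cancel₀ hx0.ne']
      have hk := key x' (le_of_eq hx'1)
      have h5 : ‖S x'‖ ≤ (‖A‖ ^ p - ((1:ℝ)/8) ^ (p - 1) / 1000) ^ (1/p : ℝ) := by
        have h6 := Real.rpow_le_rpow (Real.rpow_nonneg (norm_nonneg _) p) hk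
          (by positivity : (0:ℝ) ≤ 1/p)
        rw [one_div p, Real.rpow_rpow_inv (norm_nonneg _) hp0.ne'] at h6
        rw [one_div p]
        exact h6
      have hsx' : ‖S x'‖ = ‖x‖⁻¹ * ‖S x‖ := by
        rw [hx'_def, map_smul, norm_smul, norm_inv, norm_norm]
      have h7 : ‖S x‖ = ‖x‖ * ‖S x'‖ := by
        rw [hsx']; field_simp
      rw [h7, mul_comm]
      exact mul_le_mul_of_nonneg_right h5 hx0.le
  have hC_lt : (‖A‖ ^ p - ((1:ℝ)/8) ^ (p - 1) / 1000) ^ (1/p : ℝ) < ‖A‖ := by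
    by_contra h
    push_neg at h
    have h1 := Real.rpow_le_rpow hM0.le h hp0.le
    rw [one_div p, Real.rpow_inv_rpow hMδ0 hp0.ne'] at h1
    linarith
  have hAT : ¬ BJOrth A T := by
    intro hBJ
    have h1 := hBJ (-(100*p)⁻¹)
    rw [← hS_def] at h1
    linarith
  exact ⟨hTA, hAT, fun h => hAT (h A hTA)⟩
end
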